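/- arXiv:1912.04586 — 8 statements merged into one kernel-verified Lean document; each statement's English description precedes it below -/
import Mathlib

section
/- Let K ⊆ L be number fields and let m = [L : K] be the relative degree, so that every complex embedding σ : K → ℂ has exactly m extensions τ : L → ℂ. Then for every α ∈ L: |N_{L/ℚ}(α)|² ≤ ∏_{σ : K → ℂ} ( (1/m) · ∑_{τ : L → ℂ, τ∣_K = σ} |τ(α)|² )^m. (This is the inequality between relative arithmetic and geometric norms: the absolute norm of α is bounded by the product over embeddings of K of the m-th power of the normalized relative Hermitian norm, i.e. |N_{L/ℚ}(α)| ≤ (N_{K/ℚ}(‖α‖_{L/K})/√m)^m.) -/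
/-!
Group the factors of `|N_{L/ℚ}(α)|² = ∏_τ |τ α|²` according to the restriction `σ = τ|_K`.
The extensions of `σ` are exactly the `K`-algebra maps `L → ℂ` for the `K`-structure on `ℂ`
given by `σ`, so each group has `[L : K]` members, and AM-GM bounds each group's product by
the `[L : K]`-th power of its arithmetic mean.
-/

open scoped Classical

open Finset

theorem Real.prod_le_arith_mean_pow {ι : Type*} (s : Finset ι) (f : ι → ℝ)
    (hf : ∀ i ∈ s, 0 ≤ f i) :
    ∏ i ∈ s, f i ≤ ((1 / (#s : ℝ)) * ∑ i ∈ s, f i) ^ #s := by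
  rcases s.eq_empty_or_nonempty with rfl | hs
  · simp
  have hcard : (0 : ℝ) < #s := by exact_mod_cast hs.card_pos
  have hAM := Real.geom_mean_le_arith_mean_weighted s (fun _ => 1 / (#s : ℝ)) f
    (fun _ _ => by positivity) (by rw [sum_const, nsmul_eq_mul]; field_simp) hf
  rw [Real.finsetProd_rpow s f hf, ← mul_sum] at hAM
  calc ∏ i ∈ s, f i = ((∏ i ∈ s, f i) ^ (1 / (#s : ℝ))) ^ #s := by
        rw [← Real.rpow_natCast, ← Real.rpow_mul (prod_nonneg hf), one_div_mul_cancel hcard.ne',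
          Real.rpow_one]
    _ ≤ _ := pow_le_pow_left₀ (Real.rpow_nonneg (prod_nonneg hf) _) hAM _

theorem card_filter_comp_algebraMap_eq_finrank {K L Ω : Type*} [Field K] [Field L] [Field Ω]
    [Algebra K L] [FiniteDimensional K L] [Algebra.IsSeparable K L] [IsAlgClosed Ω]
    [Fintype (L →+* Ω)] (σ : K →+* Ω) :
    #{τ : L →+* Ω | τ.comp (algebraMap K L) = σ} = Module.finrank K L := by
  let _ : Algebra K Ω := σ.toAlgebra
  let extensionsEquivAlgHom : {τ : L →+* Ω // τ.comp (algebraMap K L) = σ} ≃ (L →ₐ[K] Ω) :=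
    { toFun := fun τ => { toRingHom := τ.1, commutes' := RingHom.congr_fun τ.2 }
      invFun := fun f => ⟨f, RingHom.ext f.commutes⟩
      left_inv := fun _ => rfl
      right_inv := fun _ => rfl }
  rw [← Fintype.card_subtype, Fintype.card_congr extensionsEquivAlgHom, AlgHom.card]

theorem NumberField.abs_norm_eq_prod_norm_embeddings {L : Type*} [Field L] [NumberField L]
    (α : L) : ((|Algebra.norm ℚ α| : ℚ) : ℝ) = ∏ τ : L →+* ℂ, ‖τ α‖ := by
  have hnorm := congrArg (‖·‖) (Algebra.norm_eq_prod_embeddings ℚ ℂ α)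
  rw [norm_prod, eq_ratCast, Complex.norm_ratCast] at hnorm
  rw [Rat.cast_abs, hnorm]
  exact Fintype.prod_equiv (RingHom.equivRatAlgHom L ℂ).symm _ _ fun _ => rfl

/-- Inequality between relative arithmetic and geometric norms: for number fields `K ⊆ L` of
relative degree `m`, the square of the absolute norm of `α ∈ L` is bounded by the product over
the embeddings `σ` of `K` of the `m`-th power of the average of `|τ(α)|²` over the `m`
extensions `τ` of `σ` to `L`. -/
theorem relative_arithmetic_geometric_norm_inequality (K L : Type*) [Field K] [Field L]
    [NumberField K] [NumberField L] [Algebra K L] (α : L) :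
    ((|Algebra.norm ℚ α| : ℚ) : ℝ) ^ 2 ≤
      ∏ σ : K →+* ℂ,
        ((1 / (Module.finrank K L : ℝ)) *
          ∑ τ ∈ Finset.univ.filter (fun τ : L →+* ℂ => τ.comp (algebraMap K L) = σ),
            ‖τ α‖ ^ 2) ^ (Module.finrank K L) := by
  calc ((|Algebra.norm ℚ α| : ℚ) : ℝ) ^ 2 = ∏ τ : L →+* ℂ, ‖τ α‖ ^ 2 := by
        rw [NumberField.abs_norm_eq_prod_norm_embeddings, prod_pow]
    _ = ∏ σ : K →+* ℂ, ∏ τ ∈ univ.filter (fun τ : L →+* ℂ => τ.comp (algebraMap K L) = σ),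
          ‖τ α‖ ^ 2 :=
        (prod_fiberwise univ (fun τ : L →+* ℂ => τ.comp (algebraMap K L)) _).symm
    _ ≤ _ := by
        refine prod_le_prod (fun σ _ => prod_nonneg fun τ _ => by positivity) fun σ _ => ?_
        have hAMGM := Real.prod_le_arith_mean_pow {τ : L →+* ℂ | τ.comp (algebraMap K L) = σ}
          (fun τ => ‖τ α‖ ^ 2) (fun τ _ => by positivity)
        rwa [card_filter_comp_algebraMap_eq_finrank σ] at hAMGM
end

section
/- Let E be a real inner product space, let d ≥ 1, let 1/4 < δ < 1, and let v₁, …, v_d ∈ E be linearly independent vectors with Gram–Schmidt orthogonalization v₁*, …, v_d* (where v_i* is the projection of v_i orthogonally to the span of v₁, …, v_{i−1}). Assume the basis is δ-LLL-reduced, i.e. (size-reduction) |⟨v_j, v_i*⟩| ≤ ‖v_i*‖²/2 for all i < j, and (Lovász condition) δ‖v_i*‖² ≤ ‖v_{i+1}*‖² + ⟨v_{i+1}, v_i*⟩²/‖v_i*‖² for all 1 ≤ i ≤ d−1. Then for every 1 ≤ k ≤ d: ∏_{i=1}^{k} ‖v_i*‖ ≤ (δ − 1/4)^{−(d−k)k/4}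 · ( ∏_{i=1}^{d} ‖v_i*‖ )^{k/d}. -/
/-!
Size reduction bounds the Lovász correction term by `‖v_i*‖² / 4`, so the squared Gram–Schmidt
norms satisfy `(δ - 1/4) ‖v_i*‖² ≤ ‖v_{i+1}*‖²`; that is, `‖v_i*‖² / (δ - 1/4)^i` is
nondecreasing. For a nondecreasing nonnegative sequence the geometric mean of the first `k`
terms is at most that of all `d` terms. Undoing the normalisation costs the factors
`(δ - 1/4)^(k choose 2)` and `(δ - 1/4)^(d choose 2)`, which combine into the exponent
`-(d - k) k / 4` after taking `2d`-th roots.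
-/

open Finset

theorem prod_range_pow_le_prod_range_pow_of_monotoneOn {c : ℕ → ℝ} {k d : ℕ}
    (hc0 : ∀ i, 0 ≤ c i) (hc : MonotoneOn c (Set.Iio d)) (hkd : k ≤ d) :
    (∏ i ∈ range k, c i) ^ d ≤ (∏ i ∈ range d, c i) ^ k := by
  have hprefix : (∏ i ∈ range k, c i) ^ (d - k) ≤ (∏ j ∈ Ico k d, c j) ^ k := by
    calc (∏ i ∈ range k, c i) ^ (d - k) = ∏ i ∈ range k, ∏ _j ∈ Ico k d, c i := by
          rw [← prod_pow]; simp
      _ ≤ ∏ _i ∈ range k, ∏ j ∈ Ico k d, c j := by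
          refine prod_le_prod (fun i _ => prod_nonneg fun _ _ => hc0 i) fun i hi => ?_
          refine prod_le_prod (fun _ _ => hc0 i) fun j hj => ?_
          simp only [mem_range, mem_Ico] at hi hj
          exact hc (by simp; omega) (by simpa using hj.2) (by omega)
      _ = (∏ j ∈ Ico k d, c j) ^ k := by simp
  calc (∏ i ∈ range k, c i) ^ d
      = (∏ i ∈ range k, c i) ^ k * (∏ i ∈ range k, c i) ^ (d - k) := by
        rw [← pow_add, Nat.add_sub_cancel' hkd]
    _ ≤ (∏ i ∈ range k, c i) ^ k * (∏ j ∈ Ico k d, c j) ^ k := by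
        gcongr
        exact pow_nonneg (prod_nonneg fun i _ => hc0 i) k
    _ = (∏ i ∈ range d, c i) ^ k := by rw [← mul_pow, prod_range_mul_prod_Ico c hkd]

theorem monotoneOn_div_pow_of_mul_le_succ {b : ℕ → ℝ} {α : ℝ} {d : ℕ} (hα : 0 < α)
    (h : ∀ i, i + 1 < d → α * b i ≤ b (i + 1)) :
    MonotoneOn (fun i => b i / α ^ i) (Set.Iio d) := by
  refine monotoneOn_of_le_add_one Set.ordConnected_Iio fun i _ _ hi => ?_
  rw [pow_succ, ← div_div, div_right_comm]
  gcongr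
  rw [le_div_iff₀ hα, mul_comm]
  exact h i hi

theorem prod_range_eq_pow_choose_two_mul_prod_div_pow (b : ℕ → ℝ) {α : ℝ} (hα : α ≠ 0) (n : ℕ) :
    ∏ i ∈ range n, b i = α ^ n.choose 2 * ∏ i ∈ range n, b i / α ^ i := by
  rw [Nat.choose_two_right, ← sum_range_id, ← prod_pow_eq_pow_sum, ← prod_mul_distrib]
  exact prod_congr rfl fun i _ => by field_simp

theorem pow_mul_prod_range_pow_le {b : ℕ → ℝ} {α : ℝ} {k d : ℕ} (hα : 0 < α)
    (hb0 : ∀ i, 0 ≤ b i) (h : ∀ i, i + 1 < d → α * b i ≤ b (i + 1)) (hkd : k ≤ d) :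
    α ^ (k * d.choose 2) * (∏ i ∈ range k, b i) ^ d ≤
      α ^ (d * k.choose 2) * (∏ i ∈ range d, b i) ^ k := by
  have hmono := prod_range_pow_le_prod_range_pow_of_monotoneOn
    (fun i => div_nonneg (hb0 i) (pow_nonneg hα.le i)) (monotoneOn_div_pow_of_mul_le_succ hα h) hkd
  rw [prod_range_eq_pow_choose_two_mul_prod_div_pow b hα.ne' k,
    prod_range_eq_pow_choose_two_mul_prod_div_pow b hα.ne' d,
    mul_pow, mul_pow, ← pow_mul, ← pow_mul, ← mul_assoc, ← mul_assoc, ← pow_add, ← pow_add]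
  rw [show k * d.choose 2 + k.choose 2 * d = d * k.choose 2 + d.choose 2 * k by ring]
  gcongr

theorem sub_quarter_mul_le_of_lovasz {δ x y c : ℝ} (hx : 0 ≤ x) (hc : |c| ≤ x / 2)
    (h : δ * x ≤ y + c ^ 2 / x) : (δ - 1 / 4) * x ≤ y := by
  rcases hx.eq_or_lt with rfl | hx
  · simpa using h
  have hc2 : c ^ 2 / x ≤ x / 4 := by
    rw [div_le_iff₀ hx, ← sq_abs]
    nlinarith [abs_nonneg c]
  linarith

theorem Fin.prod_filter_val_lt {M : Type*} [CommMonoid M] (f : ℕ → M) {k d : ℕ} (hkd : k ≤ d) :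
    ∏ i ∈ univ.filter (fun i : Fin d => (i : ℕ) < k), f i = ∏ i ∈ range k, f i := by
  rw [prod_filter, Fin.prod_univ_eq_prod_range (fun i => if i < k then f i else 1), ← prod_filter]
  congr 1
  ext i
  simp only [mem_filter, mem_range]
  omega

theorem le_rpow_mul_rpow_of_rpow_mul_pow_le {α P R x y : ℝ} {m n : ℕ} (hα : 0 < α)
    (hP : 0 ≤ P) (hR : 0 ≤ R) (hn : n ≠ 0) (h : α ^ x * P ^ n ≤ α ^ y * R ^ m) :
    P ≤ α ^ ((y - x) / n) * R ^ ((m : ℝ) / n) := by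
  have hPn : P ^ n ≤ α ^ (y - x) * R ^ m := by
    rw [Real.rpow_sub hα, div_mul_eq_mul_div, le_div_iff₀ (by positivity), mul_comm]
    exact h
  calc P = (P ^ n) ^ (n⁻¹ : ℝ) := (Real.pow_rpow_inv_natCast hP hn).symm
    _ ≤ (α ^ (y - x) * R ^ m) ^ (n⁻¹ : ℝ) := by gcongr
    _ = α ^ ((y - x) / n) * R ^ ((m : ℝ) / n) := by
      rw [Real.mul_rpow (by positivity) (by positivity), ← Real.rpow_mul hα.le,
        ← Real.rpow_natCast, ← Real.rpow_mul hR, div_eq_mul_inv, div_eq_mul_inv]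

theorem lll_reduced_flag_volume_bound_general {E : Type*} [NormedAddCommGroup E]
    [InnerProductSpace ℝ E]
    (d : ℕ) (δ : ℝ) (hδ1 : 1 / 4 < δ)
    (v vStar : Fin d → E)
    (hsize : ∀ i j : Fin d, i < j → |(inner ℝ (v j) (vStar i) : ℝ)| ≤ ‖vStar i‖ ^ 2 / 2)
    (hlovasz : ∀ (i : Fin d) (h : (i : ℕ) + 1 < d),
      δ * ‖vStar i‖ ^ 2 ≤ ‖vStar ⟨(i : ℕ) + 1, h⟩‖ ^ 2 +
        (inner ℝ (v ⟨(i : ℕ) + 1, h⟩) (vStar i) : ℝ) ^ 2 / ‖vStar i‖ ^ 2) :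
    ∀ k : ℕ, 1 ≤ k → k ≤ d →
      ∏ i ∈ Finset.univ.filter (fun i : Fin d => (i : ℕ) < k), ‖vStar i‖ ≤
        (δ - 1 / 4) ^ (-((((d : ℝ) - (k : ℝ)) * (k : ℝ)) / 4)) *
          (∏ i : Fin d, ‖vStar i‖) ^ ((k : ℝ) / (d : ℝ)) := by
  intro k hk hkd
  have hα : 0 < δ - 1 / 4 := by linarith
  set a : ℕ → ℝ := fun i => if h : i < d then ‖vStar ⟨i, h⟩‖ else 0
  have ha : ∀ i : Fin d, ‖vStar i‖ = a i := fun i => by simp [a]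
  have hstep : ∀ i, i + 1 < d → (δ - 1 / 4) * a i ^ 2 ≤ a (i + 1) ^ 2 := fun i hi => by
    simpa only [a, dif_pos hi, dif_pos (Nat.lt_of_succ_lt hi)] using
      sub_quarter_mul_le_of_lovasz (sq_nonneg _)
        (hsize ⟨i, by omega⟩ ⟨i + 1, hi⟩ (Nat.lt_succ_self i)) (hlovasz ⟨i, by omega⟩ hi)
  have hvol := pow_mul_prod_range_pow_le hα (fun i => sq_nonneg (a i)) hstep hkd
  simp only [prod_pow, ← pow_mul, ← Real.rpow_natCast (δ - 1 / 4)] at hvol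
  simp only [ha, Fin.prod_filter_val_lt a hkd, Fin.prod_univ_eq_prod_range]
  convert le_rpow_mul_rpow_of_rpow_mul_pow_le hα (prod_nonneg fun i _ => ?_)
    (prod_nonneg fun i _ => ?_) (by omega) hvol using 3
  · have hd : (d : ℝ) ≠ 0 := by norm_cast; omega
    push_cast [Nat.cast_choose_two]
    field_simp
    ring
  · push_cast
    field_simp
  all_goals simp only [a]; split_ifs <;> positivity

/-- For a `δ`-LLL-reduced basis, the volume of the flag sublattice spanned by the first `k`
vectors is bounded in terms of the total volume:
`∏_{i<k} ‖v_i*‖ ≤ (δ − 1/4)^{−(d−k)k/4} (∏_i ‖v_i*‖)^{k/d}`. -/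
theorem lll_reduced_flag_volume_bound {E : Type*} [NormedAddCommGroup E]
    [InnerProductSpace ℝ E]
    (d : ℕ) (hd : 1 ≤ d) (δ : ℝ) (hδ1 : 1 / 4 < δ) (hδ2 : δ < 1)
    (v vStar : Fin d → E) (hlin : LinearIndependent ℝ v)
    (hGS : ∀ i : Fin d, vStar i =
      v i - ∑ j ∈ Finset.univ.filter (fun j => j < i),
        ((inner ℝ (v i) (vStar j) : ℝ) / (inner ℝ (vStar j) (vStar j) : ℝ)) • vStar j)
    (hsize : ∀ i j : Fin d, i < j → |(inner ℝ (v j) (vStar i) : ℝ)| ≤ ‖vStar i‖ ^ 2 / 2)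
    (hlovasz : ∀ (i : Fin d) (h : (i : ℕ) + 1 < d),
      δ * ‖vStar i‖ ^ 2 ≤ ‖vStar ⟨(i : ℕ) + 1, h⟩‖ ^ 2 +
        (inner ℝ (v ⟨(i : ℕ) + 1, h⟩) (vStar i) : ℝ) ^ 2 / ‖vStar i‖ ^ 2) :
    ∀ k : ℕ, 1 ≤ k → k ≤ d →
      ∏ i ∈ Finset.univ.filter (fun i : Fin d => (i : ℕ) < k), ‖vStar i‖ ≤
        (δ - 1 / 4) ^ (-((((d : ℝ) - (k : ℝ)) * (k : ℝ)) / 4)) *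
          (∏ i : Fin d, ‖vStar i‖) ^ ((k : ℝ) / (d : ℝ)) :=
  lll_reduced_flag_volume_bound_general d δ hδ1 v vStar hsize hlovasz
end

section
/- Let m ≥ 2 and define the linear operator Δ : ℝ^m → ℝ^m by (Δu)_j = (u_{j−1} + 2u_j + u_{j+1})/4 for 2 ≤ j ≤ m−1, (Δu)_1 = (u_1 + u_2)/4, and (Δu)_m = (u_{m−1} + u_m)/4. Then: (i) for every 1 ≤ k ≤ m, the vector s⁽ᵏ⁾ ∈ ℝ^m with coordinates s⁽ᵏ⁾_j = sin((2j−1)kπ/(2m)) satisfies Δ s⁽ᵏ⁾ = cos²(kπ/(2m)) · s⁽ᵏ⁾; (ii) the vectors s⁽¹⁾, …, s⁽ᵐ⁾ are pairwise orthogonal for the standard inner product; (iii) consequently, for every u ∈ ℝ^m and every integer t ≥ 0, ‖Δᵗ u‖₂ ≤ cos(π/(2m))^{2t} · ‖u‖₂ ≤ exp(−π²t/(4m²)) · ‖u‖₂. -/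
/-! With the ghost values `u_{-1} = -u_0` and `u_m = -u_{m-1}` (odd reflection at both ends), `Δ`
is the stencil `(u_{j-1} + 2 u_j + u_{j+1}) / 4` at every index. The sine modes `j ↦ sin ((2j+1)θ)` with `2mθ = kπ` are odd about both reflection points, and
`sin (x - 2θ) + 2 sin x + sin (x + 2θ) = 4 cos² θ sin x`, so they are eigenvectors. By the
product-to-sum formula their inner products reduce to sums `∑ j < m, cos ((2j+1) pπ/(2m))` with
`2m ∤ p`, which vanish; so the modes `k = 1, …, m` form an orthogonal eigenbasis, and `Δ` contracts
by its largest eigenvalue `cos² (π/(2m))`. Finally `cos x ≤ exp (-x²/2)` on `[0, π/2]` because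
`cos x · exp (x²/2)` decreases there, its derivative having the sign of `x cos x - sin x ≤ 0`. -/

open Real

namespace Real

theorem cos_le_exp_neg_sq_div_two {x : ℝ} (hx₀ : 0 ≤ x) (hx : x ≤ π / 2) :
    cos x ≤ exp (-(x ^ 2 / 2)) := by
  set g : ℝ → ℝ := fun y => cos y * exp (y ^ 2 / 2)
  have hg : ∀ y, HasDerivAt g (exp (y ^ 2 / 2) * (y * cos y - sin y)) y := by
    intro y
    refine ((hasDerivAt_cos y).mul ((hasDerivAt_pow 2 y).div_const 2).exp).congr_deriv ?_
    push_cast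
    ring
  have hanti : AntitoneOn g (Set.Icc 0 (π / 2)) := by
    refine antitoneOn_of_deriv_nonpos (convex_Icc _ _)
      (fun y _ => (hg y).continuousAt.continuousWithinAt)
      (fun y _ => (hg y).differentiableAt.differentiableWithinAt) fun y hy => ?_
    rw [interior_Icc] at hy
    have hcos : 0 < cos y := cos_pos_of_mem_Ioo ⟨by linarith [hy.1, pi_pos], hy.2⟩
    have htan : y * cos y ≤ sin y :=
      (le_div_iff₀ hcos).1 ((le_tan hy.1.le hy.2).trans_eq (tan_eq_sin_div_cos y))
    rw [(hg y).deriv]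
    exact mul_nonpos_of_nonneg_of_nonpos (exp_pos _).le (by linarith)
  have hg0 : cos x * exp (x ^ 2 / 2) ≤ 1 := by
    simpa [g] using hanti ⟨le_rfl, by positivity⟩ ⟨hx₀, hx⟩ hx₀
  rwa [exp_neg, ← one_div, le_div_iff₀ (exp_pos _)]

theorem cos_pi_div_pow_le_exp (m t : ℕ) :
    cos (π / (2 * m)) ^ (2 * t) ≤ exp (-(π ^ 2 * t) / (4 * m ^ 2)) := by
  rcases Nat.eq_zero_or_pos m with rfl | hm
  · simp
  have hm' : (1 : ℝ) ≤ m := Nat.one_le_cast.2 hm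
  have hx₀ : 0 ≤ π / (2 * m) := by positivity
  have hx : π / (2 * m) ≤ π / 2 := div_le_div_of_nonneg_left pi_pos.le two_pos (by linarith)
  calc cos (π / (2 * m)) ^ (2 * t) ≤ exp (-((π / (2 * m)) ^ 2 / 2)) ^ (2 * t) :=
        pow_le_pow_left₀ (cos_nonneg_of_neg_pi_div_two_le_of_le (by linarith [pi_pos]) hx)
          (cos_le_exp_neg_sq_div_two hx₀ hx) _
    _ = exp (-(π ^ 2 * t) / (4 * m ^ 2)) := by
        rw [← exp_nat_mul]
        congr 1
        push_cast
        field_simp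
        ring

theorem sum_range_cos_odd_mul_int_mul_pi_div {n : ℕ} {p : ℤ} (hp : ¬ (2 * n : ℤ) ∣ p) :
    ∑ j ∈ Finset.range n, cos ((2 * j + 1) * (p * π / (2 * n))) = 0 := by
  rcases Nat.eq_zero_or_pos n with rfl | hn
  · simp
  set c := p * π / (2 * n) with hc
  have hsin : sin c ≠ 0 := by
    rw [Ne, sin_eq_zero_iff]
    rintro ⟨q, hq⟩
    refine hp ⟨q, ?_⟩
    rw [hc, eq_div_iff (by positivity)] at hq
    exact_mod_cast (mul_right_cancel₀ pi_ne_zero (by linarith) : (p : ℝ) = 2 * n * q)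
  -- `∑ j < n, cos ((2j+1)c) = sin (2nc) / (2 sin c)`, and `2nc = pπ`
  have hrhs : sin (n * (2 * c) / 2) * cos ((n - 1) * (2 * c) / 2 + c) = 0 := by
    have h2nc : 2 * (n * c) = p * π := by rw [hc]; field_simp
    rw [show (n - 1) * (2 * c) / 2 + c = n * c by ring, show n * (2 * c) / 2 = n * c by ring,
      ← mul_div_cancel_left₀ (sin (n * c) * cos (n * c)) two_ne_zero, ← mul_assoc, ← sin_two_mul,
      h2nc, sin_int_mul_pi, zero_div]
  have := sin_mul_sum_cos n (2 * c) c
  rw [hrhs, mul_div_cancel_left₀ c two_ne_zero, mul_eq_zero] at this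
  rw [← this.resolve_left hsin]
  exact Finset.sum_congr rfl fun j _ => by ring_nf

theorem sin_sub_two_mul_add_sin_add_two_mul (x θ : ℝ) :
    sin (x - 2 * θ) + 2 * sin x + sin (x + 2 * θ) = 4 * cos θ ^ 2 * sin x := by
  rw [sin_sub, sin_add, cos_two_mul]
  ring

theorem cos_nat_mul_pi_div_sq_le {m k : ℕ} (hk : 1 ≤ k) (hkm : k ≤ m) :
    cos (k * π / (2 * m)) ^ 2 ≤ cos (π / (2 * m)) ^ 2 := by
  have hk' : (1 : ℝ) ≤ k := by exact_mod_cast hk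
  have hkm' : (k : ℝ) ≤ m := by exact_mod_cast hkm
  have h₀ : 0 ≤ π / (2 * m) := by positivity
  have hle : π / (2 * m) ≤ k * π / (2 * m) := by
    rw [mul_div_assoc]
    exact le_mul_of_one_le_left h₀ hk'
  have hπ2 : k * π / (2 * m) ≤ π / 2 := by
    rw [div_le_div_iff₀ (by linarith) two_pos]
    nlinarith [pi_pos]
  exact pow_le_pow_left₀ (cos_nonneg_of_neg_pi_div_two_le_of_le (by linarith [pi_pos]) hπ2)
    (cos_le_cos_of_nonneg_of_le_pi h₀ (by linarith [pi_pos]) hle) 2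

end Real

theorem norm_iterate_le_pow_mul {E : Type*} [SeminormedAddCommGroup E] {f : E → E} {c : ℝ}
    (hc : 0 ≤ c) (hf : ∀ x, ‖f x‖ ≤ c * ‖x‖) (n : ℕ) (x : E) : ‖f^[n] x‖ ≤ c ^ n * ‖x‖ := by
  induction n with
  | zero => simp
  | succ n ih =>
    rw [Function.iterate_succ_apply', pow_succ', mul_assoc]
    exact (hf _).trans (mul_le_mul_of_nonneg_left ih hc)

section EigenBound

variable {ι E : Type*} [NormedAddCommGroup E] [InnerProductSpace ℝ E]

theorem orthonormal_inv_norm_smul {v : ι → E} (hv₀ : ∀ i, v i ≠ 0)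
    (hv : Pairwise fun i j => inner ℝ (v i) (v j) = 0) :
    Orthonormal ℝ fun i => ‖v i‖⁻¹ • v i := by
  classical
  rw [orthonormal_iff_ite]
  intro i j
  simp only [real_inner_smul_left, real_inner_smul_right]
  split_ifs with hij
  · subst hij
    have : ‖v i‖ ≠ 0 := norm_ne_zero_iff.2 (hv₀ i)
    rw [real_inner_self_eq_norm_sq]
    field_simp
  · rw [hv hij, mul_zero, mul_zero]

theorem OrthonormalBasis.norm_apply_le_of_eigen [Fintype ι] (b : OrthonormalBasis ι ℝ E)
    {T : E →ₗ[ℝ] E} {μ : ι → ℝ} (hT : ∀ i, T (b i) = μ i • b i) {c : ℝ} (hc : 0 ≤ c)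
    (hμ : ∀ i, |μ i| ≤ c) (u : E) : ‖T u‖ ≤ c * ‖u‖ := by
  classical
  have hrepr : ∀ i, b.repr (T u) i = μ i * b.repr u i := by
    intro i
    conv_lhs => rw [← b.sum_repr u]
    simp [map_sum, map_smul, hT, b.repr_self, Pi.single_apply, smul_smul, mul_comm]
  have hsq : ‖T u‖ ^ 2 ≤ (c * ‖u‖) ^ 2 := by
    rw [← b.repr.norm_map, ← b.repr.norm_map u, EuclideanSpace.norm_sq_eq, mul_pow,
      EuclideanSpace.norm_sq_eq, Finset.mul_sum]
    refine Finset.sum_le_sum fun i _ => ?_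
    rw [hrepr, Real.norm_eq_abs, Real.norm_eq_abs, abs_mul, mul_pow]
    exact mul_le_mul_of_nonneg_right (pow_le_pow_left₀ (abs_nonneg _) (hμ i) 2) (by positivity)
  exact le_of_pow_le_pow_left₀ two_ne_zero (by positivity) hsq

end EigenBound

noncomputable def sineMode (m k : ℕ) : EuclideanSpace ℝ (Fin m) :=
  WithLp.toLp 2 fun j => sin ((2 * j + 1) * (k * π / (2 * m)))

@[simp]
theorem sineMode_apply (m k : ℕ) (j : Fin m) :
    sineMode m k j = sin ((2 * j + 1) * (k * π / (2 * m))) := rfl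

theorem inner_sineMode_eq_zero {m k l : ℕ} (hkl : k ≠ l) (hlt : k + l < 2 * m) :
    inner ℝ (sineMode m k) (sineMode m l) = 0 := by
  have hndvd : ∀ p : ℤ, p ≠ 0 → |p| < 2 * m → ¬ (2 * m : ℤ) ∣ p := fun p hp hlt hdvd =>
    hp (Int.eq_zero_of_abs_lt_dvd hdvd hlt)
  have hprod : ∀ x : ℝ, sin (x * (l * π / (2 * m))) * sin (x * (k * π / (2 * m))) =
      (cos (x * ((l - k : ℤ) * π / (2 * m))) - cos (x * ((l + k : ℤ) * π / (2 * m)))) / 2 := by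
    intro x
    rw [eq_div_iff two_ne_zero, mul_comm, ← mul_assoc, two_mul_sin_mul_sin]
    push_cast
    ring_nf
  simp only [PiLp.inner_apply, sineMode_apply, RCLike.inner_apply, conj_trivial, hprod]
  rw [← Finset.sum_div, Finset.sum_sub_distrib,
    Fin.sum_univ_eq_sum_range (fun j => cos ((2 * j + 1) * ((l - k : ℤ) * π / (2 * m)))),
    Fin.sum_univ_eq_sum_range (fun j => cos ((2 * j + 1) * ((l + k : ℤ) * π / (2 * m)))),
    sum_range_cos_odd_mul_int_mul_pi_div (hndvd _ (by omega) (by rw [abs_lt]; omega)),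
    sum_range_cos_odd_mul_int_mul_pi_div (hndvd _ (by omega) (by rw [abs_lt]; omega))]
  simp

theorem sineMode_ne_zero {m k : ℕ} (hk₀ : 0 < k) (hk : k < 2 * m) : sineMode m k ≠ 0 := by
  have hm : 0 < m := by omega
  intro h
  have h0 := congrArg (· ⟨0, hm⟩) h
  simp only [sineMode_apply, Nat.cast_zero, mul_zero, zero_add, one_mul] at h0
  refine (sin_pos_of_pos_of_lt_pi (by positivity) ?_).ne' h0
  rw [div_lt_iff₀ (by positivity)]
  have : (k : ℝ) < 2 * m := by exact_mod_cast hk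
  nlinarith [pi_pos]

theorem Fin.eq_zero_or_eq_sub_one_or_interior {m : ℕ} (hm : 2 ≤ m) (j : Fin m) :
    j = ⟨0, Nat.zero_lt_of_lt hm⟩ ∨
      j = ⟨m - 1, Nat.sub_lt (Nat.zero_lt_of_lt hm) Nat.zero_lt_one⟩ ∨
      (0 < (j : ℕ) ∧ (j : ℕ) < m - 1) := by
  simp only [Fin.ext_iff]
  omega

structure IsAveragingOperator (m : ℕ) (hm : 2 ≤ m)
    (Δ : EuclideanSpace ℝ (Fin m) → EuclideanSpace ℝ (Fin m)) : Prop where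
  apply_zero : ∀ u : EuclideanSpace ℝ (Fin m),
    Δ u ⟨0, Nat.zero_lt_of_lt hm⟩ = (u ⟨0, Nat.zero_lt_of_lt hm⟩ + u ⟨1, hm⟩) / 4
  apply_last : ∀ u : EuclideanSpace ℝ (Fin m),
    Δ u ⟨m - 1, Nat.sub_lt (Nat.zero_lt_of_lt hm) Nat.zero_lt_one⟩ =
      (u ⟨m - 2, Nat.sub_lt (Nat.zero_lt_of_lt hm) Nat.zero_lt_two⟩ +
        u ⟨m - 1, Nat.sub_lt (Nat.zero_lt_of_lt hm) Nat.zero_lt_one⟩) / 4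
  apply_of_lt : ∀ (u : EuclideanSpace ℝ (Fin m)) (j : Fin m) (_ : 0 < (j : ℕ))
    (h : (j : ℕ) < m - 1),
    Δ u j = (u ⟨(j : ℕ) - 1, (Nat.sub_le _ _).trans_lt j.isLt⟩ + 2 * u j +
      u ⟨(j : ℕ) + 1, Nat.add_lt_of_lt_sub h⟩) / 4

namespace IsAveragingOperator

variable {m : ℕ} {hm : 2 ≤ m} {Δ : EuclideanSpace ℝ (Fin m) → EuclideanSpace ℝ (Fin m)}

theorem isLinearMap (hΔ : IsAveragingOperator m hm Δ) : IsLinearMap ℝ Δ := by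
  refine ⟨fun u v => ?_, fun a u => ?_⟩ <;> ext j <;>
    rcases Fin.eq_zero_or_eq_sub_one_or_interior hm j with rfl | rfl | ⟨h₁, h₂⟩ <;>
    simp (disch := omega) only [PiLp.add_apply, PiLp.smul_apply, smul_eq_mul, hΔ.apply_zero,
      hΔ.apply_last, hΔ.apply_of_lt] <;>
    ring

theorem apply_sineMode (hΔ : IsAveragingOperator m hm Δ) (k : ℕ) :
    Δ (sineMode m k) = cos (k * π / (2 * m)) ^ 2 • sineMode m k := by
  set θ := k * π / (2 * m) with hθ
  have hmode : ∀ j, sineMode m k j = sin ((2 * j + 1) * θ) := fun j => rfl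
  ext j
  rw [PiLp.smul_apply, smul_eq_mul, hmode]
  rcases Fin.eq_zero_or_eq_sub_one_or_interior hm j with rfl | rfl | ⟨h₁, h₂⟩
  · have key := sin_sub_two_mul_add_sin_add_two_mul θ θ
    rw [show θ - 2 * θ = -θ by ring, sin_neg] at key
    rw [hΔ.apply_zero, hmode, hmode]
    rw [show (2 * ((0 : ℕ) : ℝ) + 1) * θ = θ by simp,
      show (2 * ((1 : ℕ) : ℝ) + 1) * θ = θ + 2 * θ by push_cast; ring]
    linarith
  · set x := (2 * ((m - 1 : ℕ) : ℝ) + 1) * θ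
    have hkπ : x + 2 * θ = k * π + θ ∧ x = k * π - θ := by
      constructor <;> simp only [x, hθ] <;> push_cast [Nat.cast_sub (by omega : 1 ≤ m)] <;>
        field_simp <;> ring
    have hghost : sin (x + 2 * θ) = - sin x := by
      rw [hkπ.1, hkπ.2, sin_add, sin_sub, sin_nat_mul_pi]
      ring
    have key := sin_sub_two_mul_add_sin_add_two_mul x θ
    rw [hΔ.apply_last, hmode, hmode]
    rw [show (2 * ((m - 2 : ℕ) : ℝ) + 1) * θ = x - 2 * θ by
      simp only [x]; push_cast [Nat.cast_sub (by omega : 1 ≤ m), Nat.cast_sub hm]; ring]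
    linarith
  · set x := (2 * ((j : ℕ) : ℝ) + 1) * θ
    have key := sin_sub_two_mul_add_sin_add_two_mul x θ
    rw [hΔ.apply_of_lt _ _ h₁ h₂, hmode, hmode, hmode]
    rw [show (2 * (((j : ℕ) - 1 : ℕ) : ℝ) + 1) * θ = x - 2 * θ by
        simp only [x]; push_cast [Nat.cast_sub (by omega : 1 ≤ (j : ℕ))]; ring,
      show (2 * (((j : ℕ) + 1 : ℕ) : ℝ) + 1) * θ = x + 2 * θ by simp only [x]; push_cast; ring]
    linarith

theorem norm_apply_le (hΔ : IsAveragingOperator m hm Δ) (u : EuclideanSpace ℝ (Fin m)) :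
    ‖Δ u‖ ≤ cos (π / (2 * m)) ^ 2 * ‖u‖ := by
  let v : Fin m → EuclideanSpace ℝ (Fin m) := fun i => sineMode m (i + 1)
  have hon : Orthonormal ℝ fun i => ‖v i‖⁻¹ • v i :=
    orthonormal_inv_norm_smul (fun i => sineMode_ne_zero (by omega) (by omega))
      fun i j hij => inner_sineMode_eq_zero (fun h => hij (Fin.ext (by omega))) (by omega)
  let b := OrthonormalBasis.mk hon
    (hon.linearIndependent.span_eq_top_of_card_eq_finrank' (by simp)).ge
  have hb : ∀ i, b i = ‖v i‖⁻¹ • v i := fun i => by simp [b]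
  refine b.norm_apply_le_of_eigen (T := IsLinearMap.mk' Δ hΔ.isLinearMap)
    (μ := fun i => cos (((i : ℕ) + 1 : ℕ) * π / (2 * m)) ^ 2) (fun i => ?_) (sq_nonneg _)
    (fun i => ?_) u
  · rw [hb, map_smul, IsLinearMap.mk'_apply, hΔ.apply_sineMode, smul_comm]
  · rw [abs_of_nonneg (sq_nonneg _)]
    exact cos_nat_mul_pi_div_sq_le (by omega) i.isLt

end IsAveragingOperator

/-- Spectral analysis of the averaging (discrete Laplacian-like) step operator `Δ` on `ℝ^m`:
(i) the vectors `s⁽ᵏ⁾_j = sin((2j−1)kπ/(2m))` are eigenvectors with eigenvalue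
`cos²(kπ/(2m))`; (ii) they are pairwise orthogonal; (iii) consequently iterating `Δ`
contracts the Euclidean norm exponentially fast. -/
theorem step_operator_spectral_decay (m : ℕ) (hm : 2 ≤ m)
    (Δ : EuclideanSpace ℝ (Fin m) → EuclideanSpace ℝ (Fin m))
    (hΔ0 : ∀ u : EuclideanSpace ℝ (Fin m),
      Δ u ⟨0, by omega⟩ = (u ⟨0, by omega⟩ + u ⟨1, by omega⟩) / 4)
    (hΔlast : ∀ u : EuclideanSpace ℝ (Fin m),
      Δ u ⟨m - 1, by omega⟩ = (u ⟨m - 2, by omega⟩ + u ⟨m - 1, by omega⟩) / 4)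
    (hΔmid : ∀ (u : EuclideanSpace ℝ (Fin m)) (j : Fin m)
      (h1 : 0 < (j : ℕ)) (h2 : (j : ℕ) < m - 1),
      Δ u j = (u ⟨(j : ℕ) - 1, by omega⟩ + 2 * u j + u ⟨(j : ℕ) + 1, by omega⟩) / 4)
    (s : ℕ → EuclideanSpace ℝ (Fin m))
    (hs : ∀ (k : ℕ) (j : Fin m),
      s k j = Real.sin ((2 * (j : ℝ) + 1) * (k : ℝ) * Real.pi / (2 * m))) :
    (∀ k : ℕ, 1 ≤ k → k ≤ m →
      Δ (s k) = Real.cos ((k : ℝ) * Real.pi / (2 * m)) ^ 2 • s k) ∧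
    (∀ k l : ℕ, 1 ≤ k → k ≤ m → 1 ≤ l → l ≤ m → k ≠ l →
      (inner ℝ (s k) (s l) : ℝ) = 0) ∧
    (∀ (u : EuclideanSpace ℝ (Fin m)) (t : ℕ),
      ‖Δ^[t] u‖ ≤ Real.cos (Real.pi / (2 * m)) ^ (2 * t) * ‖u‖ ∧
      Real.cos (Real.pi / (2 * m)) ^ (2 * t) * ‖u‖ ≤
        Real.exp (-(Real.pi ^ 2 * (t : ℝ)) / (4 * (m : ℝ) ^ 2)) * ‖u‖) := by
  have hΔ : IsAveragingOperator m hm Δ := ⟨hΔ0, hΔlast, hΔmid⟩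
  obtain rfl : s = sineMode m := funext fun k => by
    ext j
    rw [hs, sineMode_apply, mul_assoc, mul_div_assoc]
  refine ⟨fun k _ _ => hΔ.apply_sineMode k,
    fun k l _ hk _ hl hkl => inner_sineMode_eq_zero hkl (by omega), fun u t => ⟨?_, ?_⟩⟩
  · rw [pow_mul]
    exact norm_iterate_le_pow_mul (sq_nonneg _) hΔ.norm_apply_le t u
  · gcongr
    exact cos_pi_div_pow_le_exp m t
end

section
/- Let f ≥ 1 be an integer and let x ∈ ℂ satisfy |x| ≥ 1 − 1/(2f). Set x' = x − (x^f − 1)/(f·x^{f−1}). Then for every ζ ∈ ℂ with ζ^f = 1 one has |x' − ζ| ≤ f·|x − ζ|². -/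
/-!
Writing `f = m + 1`, the Newton error is `x' - ζ = S (x - ζ)² / (f x^m)` with
`S = ∑_{i<m} (i + 1) x^i ζ^(m-1-i)`, a weighted geometric sum. Each `|x|^i` with `i ≤ m` is at
most `2 |x|^m`: for `|x| ≥ 1` trivially, and for `|x| < 1` because Bernoulli's inequality gives
`|x|^m ≥ (1 - 1/(2f))^m ≥ 1/2`. Hence `|S| ≤ m f |x|^m`, and `|x' - ζ| ≤ m |x - ζ|²`.
-/

open Finset

theorem weighted_geom_sum₂_mul_sq {R : Type*} [CommRing R] (x y : R) (n : ℕ) :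
    (∑ i ∈ range n, ((i : R) + 1) * x ^ i * y ^ (n - 1 - i)) * (x - y) ^ 2 =
      (n + 1) * x ^ n * (x - y) - (x ^ (n + 1) - y ^ (n + 1)) := by
  induction n with
  | zero => simp
  | succ n ih =>
    have hshift : ∑ i ∈ range n, ((i : R) + 1) * x ^ i * y ^ (n - i) =
        y * ∑ i ∈ range n, ((i : R) + 1) * x ^ i * y ^ (n - 1 - i) := by
      rw [mul_sum]
      refine sum_congr rfl fun i hi => ?_
      rw [show n - i = n - 1 - i + 1 by have := mem_range.mp hi; omega, pow_succ]
      ring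
    simp only [sum_range_succ, Nat.add_sub_cancel, Nat.sub_self, pow_zero, hshift]
    push_cast
    linear_combination y * ih

theorem half_le_pow_of_one_sub_le {r : ℝ} {m : ℕ} (hr : 1 - 1 / (2 * (m + 1)) ≤ r) :
    1 / 2 ≤ r ^ m := by
  have hstep_le : 1 / (2 * ((m : ℝ) + 1)) ≤ 1 / 2 := by
    gcongr; linarith [m.cast_nonneg (α := ℝ)]
  have hstep_nonneg : 0 ≤ 1 / (2 * ((m : ℝ) + 1)) := by positivity
  have hcancel : 1 + m * -(1 / (2 * ((m : ℝ) + 1))) = 1 / 2 + 1 / (2 * (m + 1)) := by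
    field_simp; ring
  calc (1 : ℝ) / 2 ≤ 1 + m * -(1 / (2 * (m + 1))) := by rw [hcancel]; linarith [hstep_nonneg]
    _ ≤ (1 - 1 / (2 * (m + 1))) ^ m := by
      rw [sub_eq_add_neg]; exact one_add_mul_le_pow (by linarith) m
    _ ≤ r ^ m := pow_le_pow_left₀ (by linarith) hr m

theorem pow_le_two_mul_pow {r : ℝ} {j m : ℕ} (hr : 0 ≤ r) (hrm : 1 / 2 ≤ r ^ m)
    (hj : j ≤ m) : r ^ j ≤ 2 * r ^ m := by
  rcases le_or_gt 1 r with h1 | h1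
  · linarith [pow_le_pow_right₀ h1 hj, pow_nonneg hr m]
  · linarith [pow_le_one₀ hr h1.le (n := j)]

theorem norm_weighted_geom_sum₂_le {𝕜 : Type*} [NormedField 𝕜] {x y : 𝕜} {m : ℕ}
    (hy : ‖y‖ ≤ 1) (hx : 1 / 2 ≤ ‖x‖ ^ m) :
    ‖∑ i ∈ range m, ((i : 𝕜) + 1) * x ^ i * y ^ (m - 1 - i)‖ ≤
      m * (m + 1) * ‖x‖ ^ m := by
  have hterm : ∀ i ∈ range m,
      ‖((i : 𝕜) + 1) * x ^ i * y ^ (m - 1 - i)‖ ≤ ((i : ℝ) + 1) * (2 * ‖x‖ ^ m) := by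
    intro i hi
    rw [norm_mul, norm_mul, norm_pow, norm_pow]
    have hcoeff : ‖(i : 𝕜) + 1‖ ≤ i + 1 := by
      simpa using (Nat.norm_cast_le (α := 𝕜) (i + 1))
    have hpow : ‖x‖ ^ i ≤ 2 * ‖x‖ ^ m :=
      pow_le_two_mul_pow (norm_nonneg x) hx (mem_range.mp hi).le
    have hypow : ‖y‖ ^ (m - 1 - i) ≤ 1 := pow_le_one₀ (norm_nonneg y) hy
    calc ‖(i : 𝕜) + 1‖ * ‖x‖ ^ i * ‖y‖ ^ (m - 1 - i)
        ≤ (i + 1) * (2 * ‖x‖ ^ m) * 1 := by gcongr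
      _ = _ := mul_one _
  have hgauss : ∀ n : ℕ, ∑ i ∈ range n, ((i : ℝ) + 1) * 2 = n * (n + 1) := by
    intro n
    induction n with
    | zero => simp
    | succ n ih => rw [sum_range_succ, ih]; push_cast; ring
  calc _ ≤ ∑ i ∈ range m, ((i : ℝ) + 1) * (2 * ‖x‖ ^ m) := norm_sum_le_of_le _ hterm
    _ = m * (m + 1) * ‖x‖ ^ m := by rw [← hgauss, sum_mul]; simp only [mul_assoc]

/-- Quadratic convergence of Newton's iteration for `X ^ f - 1`. -/
theorem newton_step_root_of_unity (f : ℕ) (hf : 1 ≤ f) (x : ℂ)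
    (hx : 1 - 1 / (2 * f) ≤ ‖x‖) (ζ : ℂ) (hζ : ζ ^ f = 1) :
    ‖x - (x ^ f - 1) / (f * x ^ (f - 1)) - ζ‖ ≤ f * ‖x - ζ‖ ^ 2 := by
  obtain ⟨m, rfl⟩ : ∃ m, f = m + 1 := ⟨f - 1, by omega⟩
  push_cast at hx ⊢
  set S := ∑ i ∈ range m, ((i : ℂ) + 1) * x ^ i * ζ ^ (m - 1 - i)
  have hxm : 1 / 2 ≤ ‖x‖ ^ m := half_le_pow_of_one_sub_le hx
  have hS : ‖S‖ ≤ m * (m + 1) * ‖x‖ ^ m :=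
    norm_weighted_geom_sum₂_le (Complex.norm_eq_one_of_pow_eq_one hζ m.succ_ne_zero).le hxm
  have hden : ((m : ℂ) + 1) * x ^ m ≠ 0 := by
    refine mul_ne_zero (by exact_mod_cast m.succ_ne_zero) (norm_pos_iff.mp ?_)
    rw [norm_pow]; linarith
  have hdefect : x - (x ^ (m + 1) - 1) / ((m + 1) * x ^ m) - ζ =
      S * (x - ζ) ^ 2 / ((m + 1) * x ^ m) := by
    rw [eq_div_iff hden, weighted_geom_sum₂_mul_sq, hζ, sub_mul, sub_mul,
      div_mul_cancel₀ _ hden]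
    ring
  have hnorm_succ : ‖(m : ℂ) + 1‖ = m + 1 := by exact_mod_cast Complex.norm_natCast (m + 1)
  rw [hdefect, norm_div, norm_mul, norm_mul, norm_pow, norm_pow, hnorm_succ,
    div_le_iff₀ (by positivity)]
  calc ‖S‖ * ‖x - ζ‖ ^ 2 ≤ m * (m + 1) * ‖x‖ ^ m * ‖x - ζ‖ ^ 2 := by gcongr
    _ ≤ (m + 1) * ‖x - ζ‖ ^ 2 * ((m + 1) * ‖x‖ ^ m) := by
      have : 0 ≤ ‖x‖ ^ m * ‖x - ζ‖ ^ 2 := by positivity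
      nlinarith
end

section
/- Let f ≥ 3, K = ℚ(ζ_f), n = φ(f) ≥ 2, and let A be a d × d unitriangular matrix over K (upper triangular with all diagonal entries equal to 1) such that each entry A_{ij} = ∑_{k=0}^{n−1} a_k ζ_f^k has all its coordinates in the power basis bounded by 1 in absolute value (|a_k| ≤ 1). Embed K^d into ℂ^{nd} via the n complex embeddings of K, and let ‖·‖ denote the operator norm of the induced ℂ-linear maps of A and A⁻¹. Then ‖A‖ ≤ d·n^{3/2} and ‖A⁻¹‖ ≤ 3d·(2n^{3/2})^d. -/
open Matrix
open scoped Matrix.Norms.L2Operator Classical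

noncomputable instance (f : ℕ+) : NumberField (CyclotomicField f ℚ) :=
  haveI : NeZero (f : ℕ) := ⟨f.ne_zero⟩
  haveI : NeZero ((f : ℕ) : ℚ) := ⟨Nat.cast_ne_zero.mpr f.ne_zero⟩
  @IsCyclotomicExtension.numberField {(f : ℕ)} ℚ (CyclotomicField f ℚ) _ _ _ _ _
    (CyclotomicField.isCyclotomicExtension _ _)

/-- The complex matrix describing the `ℂ`-linear action of a matrix `A` over a number field
`K` on `ℂ^{nd}`, where `K^d` is embedded into `ℂ^{nd}` via the `n` complex embeddings of
`K`. -/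
noncomputable def embMatrix {K : Type*} [Field K] {d : ℕ}
    (A : Matrix (Fin d) (Fin d) K) :
    Matrix ((K →+* ℂ) × Fin d) ((K →+* ℂ) × Fin d) ℂ :=
  Matrix.of fun p q => if p.1 = q.1 then p.1 (A p.2 q.2) else 0

/-!
Both bounds come from `‖M‖ ≤ ‖M‖_F`: the Frobenius norm of `embMatrix M` is at most `√n · d · c`
as soon as every conjugate `σ (M i j)` has absolute value at most `c`. For `A` one may take
`c = n`, since `|σ ζ| = 1`. For `A⁻¹`, back substitution in `A A⁻¹ = 1` gives
`|σ (A⁻¹ i j)| ≤ n · ∑_{i < l ≤ j} |σ (A⁻¹ l j)|`, so the partial column sums grow by a factor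
at most `1 + n` per row, and every entry of `σ (A⁻¹)` is bounded by `(1 + n)^(d-1)`.
-/

open Finset

namespace Matrix

theorem l2_opNorm_le_sqrt_sum_sq {m n 𝕜 : Type*} [Fintype m] [Fintype n] [RCLike 𝕜]
    (M : Matrix m n 𝕜) : ‖M‖ ≤ √(∑ i, ∑ j, ‖M i j‖ ^ 2) := by
  rw [l2_opNorm_def]
  refine ContinuousLinearMap.opNorm_le_bound _ (Real.sqrt_nonneg _) fun x => ?_
  have h := @frobenius_norm_mul m n Unit 𝕜 _ _ _ _ M (replicateCol Unit x.ofLp)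
  rw [← replicateCol_mulVec, frobenius_norm_replicateCol, frobenius_norm_replicateCol,
    frobenius_norm_def] at h
  simp only [Real.rpow_two, ← Real.sqrt_eq_rpow] at h
  exact h

theorem BlockTriangular.mul_apply_eq_sum_Icc {ι R : Type*} [Fintype ι] [LinearOrder ι]
    [LocallyFiniteOrder ι] [NonUnitalNonAssocSemiring R] {A B : Matrix ι ι R}
    (hA : A.BlockTriangular id) (hB : B.BlockTriangular id) (i j : ι) :
    (A * B) i j = ∑ l ∈ Icc i j, A i l * B l j := by
  rw [mul_apply]
  refine (sum_subset (subset_univ _) fun l _ hl => ?_).symm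
  rcases not_and_or.mp (mem_Icc.not.mp hl) with hil | hlj
  · exact mul_eq_zero_of_left (hA (not_le.mp hil)) _
  · exact mul_eq_zero_of_right _ (hB (not_le.mp hlj))

section Unitriangular

variable {R : Type*} {d : ℕ} {A B : Matrix (Fin d) (Fin d) R}

theorem apply_self_eq_one_of_mul_eq_one [Semiring R] (hA : A.BlockTriangular id)
    (hAdiag : ∀ i, A i i = 1) (hB : B.BlockTriangular id) (hAB : A * B = 1) (j : Fin d) :
    B j j = 1 := by
  have h := congr_fun (congr_fun hAB j) j
  rwa [hA.mul_apply_eq_sum_Icc hB, Icc_self, sum_singleton, hAdiag, one_mul, one_apply_eq] at h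

theorem apply_eq_neg_sum_Ioc_of_mul_eq_one [Ring R] (hA : A.BlockTriangular id)
    (hAdiag : ∀ i, A i i = 1) (hB : B.BlockTriangular id) (hAB : A * B = 1) {i j : Fin d}
    (hij : i < j) : B i j = -∑ l ∈ Ioc i j, A i l * B l j := by
  have h := congr_fun (congr_fun hAB i) j
  rw [hA.mul_apply_eq_sum_Icc hB, Icc_eq_cons_Ioc hij.le, sum_cons, hAdiag, one_mul,
    one_apply_ne hij.ne] at h
  exact eq_neg_of_add_eq_zero_left h

variable [NormedRing R] {c : ℝ}

theorem norm_apply_le_mul_sum_Ioc_of_mul_eq_one (hA : A.BlockTriangular id)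
    (hAdiag : ∀ i, A i i = 1) (hB : B.BlockTriangular id) (hAB : A * B = 1)
    (hc : ∀ i j, ‖A i j‖ ≤ c) {i j : Fin d} (hij : i < j) :
    ‖B i j‖ ≤ c * ∑ l ∈ Ioc i j, ‖B l j‖ := by
  rw [apply_eq_neg_sum_Ioc_of_mul_eq_one hA hAdiag hB hAB hij, norm_neg, mul_sum]
  refine (norm_sum_le _ _).trans (sum_le_sum fun l _ => ?_)
  exact (norm_mul_le _ _).trans (mul_le_mul_of_nonneg_right (hc i l) (norm_nonneg _))

variable [NormOneClass R]

theorem sum_norm_Icc_le_of_mul_eq_one (hA : A.BlockTriangular id)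
    (hAdiag : ∀ i, A i i = 1) (hB : B.BlockTriangular id) (hAB : A * B = 1)
    (hc : ∀ i j, ‖A i j‖ ≤ c) {i j : Fin d} (hij : i ≤ j) :
    ∑ l ∈ Icc i j, ‖B l j‖ ≤ (1 + c) ^ ((j : ℕ) - i) := by
  have hc₀ : 0 ≤ c := (norm_nonneg _).trans (hc i i)
  induction hk : (j : ℕ) - i generalizing i with
  | zero =>
    obtain rfl : i = j := le_antisymm hij (Fin.le_def.mpr (by omega))
    simp [apply_self_eq_one_of_mul_eq_one hA hAdiag hB hAB]
  | succ k ih =>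
    have hij' : i < j := Fin.lt_def.mpr (by omega)
    let i' : Fin d := ⟨i + 1, by omega⟩
    have hIoc : Ioc i j = Icc i' j := by
      ext l
      simp only [mem_Ioc, mem_Icc, Fin.lt_def, Fin.le_def, i']
      omega
    have hrest := ih (i := i') (Fin.le_def.mpr (by simp only [i']; omega))
      (by simp only [i']; omega)
    have hBij := norm_apply_le_mul_sum_Ioc_of_mul_eq_one hA hAdiag hB hAB hc hij'
    rw [hIoc] at hBij
    calc ∑ l ∈ Icc i j, ‖B l j‖ = ‖B i j‖ + ∑ l ∈ Icc i' j, ‖B l j‖ := by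
          rw [Icc_eq_cons_Ioc hij, sum_cons, hIoc]
      _ ≤ (1 + c) * ∑ l ∈ Icc i' j, ‖B l j‖ := by linarith
      _ ≤ (1 + c) * (1 + c) ^ k := by gcongr
      _ = (1 + c) ^ (k + 1) := (pow_succ' _ _).symm

theorem norm_apply_le_one_add_pow_of_mul_eq_one (hA : A.BlockTriangular id)
    (hAdiag : ∀ i, A i i = 1) (hB : B.BlockTriangular id) (hAB : A * B = 1)
    (hc : ∀ i j, ‖A i j‖ ≤ c) (i j : Fin d) :
    ‖B i j‖ ≤ (1 + c) ^ (d - 1) := by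
  have hc₀ : 0 ≤ c := (norm_nonneg _).trans (hc i i)
  rcases le_or_gt i j with hij | hji
  · calc ‖B i j‖ ≤ ∑ l ∈ Icc i j, ‖B l j‖ :=
          single_le_sum (f := fun l => ‖B l j‖) (fun _ _ => norm_nonneg _) (left_mem_Icc.mpr hij)
      _ ≤ (1 + c) ^ ((j : ℕ) - i) := sum_norm_Icc_le_of_mul_eq_one hA hAdiag hB hAB hc hij
      _ ≤ (1 + c) ^ (d - 1) := pow_le_pow_right₀ (by linarith) (by omega)
  · rw [hB hji, norm_zero]
    positivity

theorem norm_map_inv_apply_le {K : Type*} [Field K] (σ : K →+* R)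
    {A : Matrix (Fin d) (Fin d) K} (hA : A.BlockTriangular id) (hAdiag : ∀ i, A i i = 1)
    (hc : ∀ i j, ‖σ (A i j)‖ ≤ c) (i j : Fin d) :
    ‖σ (A⁻¹ i j)‖ ≤ (1 + c) ^ (d - 1) := by
  have hdet : IsUnit A.det := by simp [det_of_isUpperTriangular hA, hAdiag]
  have : Invertible A := A.invertibleOfIsUnitDet hdet
  refine norm_apply_le_one_add_pow_of_mul_eq_one (A := A.map σ) (B := A⁻¹.map σ) (hA.map σ)
    (by simp [hAdiag]) ((blockTriangular_inv_of_blockTriangular hA).map σ) ?_ hc i j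
  simp [← Matrix.map_mul, mul_nonsing_inv A hdet]

end Unitriangular

end Matrix

section EmbMatrix

variable {K : Type*} [Field K] [Fintype (K →+* ℂ)] {d : ℕ}

theorem sum_sq_norm_embMatrix (M : Matrix (Fin d) (Fin d) K) :
    ∑ p, ∑ q, ‖embMatrix M p q‖ ^ 2 = ∑ σ : K →+* ℂ, ∑ i, ∑ j, ‖σ (M i j)‖ ^ 2 := by
  simp [embMatrix, Fintype.sum_prod_type, apply_ite, Finset.sum_ite_irrel]

theorem norm_embMatrix_le (M : Matrix (Fin d) (Fin d) K) {c : ℝ} (hc₀ : 0 ≤ c)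
    (hc : ∀ (σ : K →+* ℂ) i j, ‖σ (M i j)‖ ≤ c) :
    ‖embMatrix M‖ ≤ √(Fintype.card (K →+* ℂ)) * d * c := by
  refine (Matrix.l2_opNorm_le_sqrt_sum_sq _).trans ?_
  rw [sum_sq_norm_embMatrix]
  calc √(∑ σ : K →+* ℂ, ∑ i, ∑ j, ‖σ (M i j)‖ ^ 2)
      ≤ √(∑ _σ : K →+* ℂ, ∑ _i : Fin d, ∑ _j : Fin d, c ^ 2) := by
        gcongr with σ _ i _ j _
        exact hc σ i j
    _ = √(Fintype.card (K →+* ℂ)) * d * c := by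
        simp only [sum_const, card_univ, Fintype.card_fin, nsmul_eq_mul]
        rw [show (Fintype.card (K →+* ℂ) : ℝ) * (d * (d * c ^ 2))
            = Fintype.card (K →+* ℂ) * (d * c) ^ 2 by ring,
          Real.sqrt_mul (Nat.cast_nonneg _), Real.sqrt_sq (by positivity), mul_assoc]

end EmbMatrix

theorem norm_map_sum_rat_mul_pow_le {K : Type*} [Field K] (σ : K →+* ℂ) {ζ : K} {f : ℕ}
    (hζ : ζ ^ f = 1) (hf : f ≠ 0) {N : ℕ} (a : Fin N → ℚ) (ha : ∀ k, |a k| ≤ 1) :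
    ‖σ (∑ k, (a k : K) * ζ ^ (k : ℕ))‖ ≤ N := by
  have hσζ : ‖σ ζ‖ = 1 :=
    Complex.norm_eq_one_of_pow_eq_one (by rw [← map_pow, hζ, map_one]) hf
  calc ‖σ (∑ k, (a k : K) * ζ ^ (k : ℕ))‖ ≤ ∑ k, ‖σ ((a k : K) * ζ ^ (k : ℕ))‖ := by
        rw [map_sum]
        exact norm_sum_le _ _
    _ ≤ ∑ _k : Fin N, (1 : ℝ) := by
        gcongr with k
        rw [map_mul, map_pow, map_ratCast, norm_mul, norm_pow, hσζ, one_pow, mul_one,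
          Complex.norm_ratCast]
        exact_mod_cast ha k
    _ = N := by simp

theorem card_embeddings_cyclotomicField (f : ℕ+) :
    Fintype.card (CyclotomicField f ℚ →+* ℂ) = Nat.totient f := by
  have : NeZero ((f : ℕ) : ℚ) := ⟨Nat.cast_ne_zero.mpr f.ne_zero⟩
  rw [NumberField.Embeddings.card]
  convert IsCyclotomicExtension.finrank (CyclotomicField f ℚ)
    (Polynomial.cyclotomic.irreducible_rat f.pos)
  exact CyclotomicField.isCyclotomicExtension _ _

theorem rpow_three_halves_eq_mul_sqrt {x : ℝ} (hx : 0 ≤ x) : x ^ ((3 : ℝ) / 2) = x * √x := by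
  rw [show (3 : ℝ) / 2 = 1 + 1 / 2 by norm_num, Real.rpow_add' hx (by norm_num), Real.rpow_one,
    Real.sqrt_eq_rpow]

theorem sqrt_mul_one_add_pow_le {x : ℝ} (hx : 1 ≤ x) {d : ℕ} (hd : d ≠ 0) :
    √x * (1 + x) ^ (d - 1) ≤ (2 * x ^ ((3 : ℝ) / 2)) ^ d := by
  obtain ⟨k, rfl⟩ := Nat.exists_eq_succ_of_ne_zero hd
  have hs : 1 ≤ √x := Real.one_le_sqrt.mpr hx
  have h1 : 1 + x ≤ 2 * x ^ ((3 : ℝ) / 2) := by rw [rpow_three_halves_eq_mul_sqrt (by linarith)]; nlinarith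
  have h2 : √x ≤ 2 * x ^ ((3 : ℝ) / 2) := by rw [rpow_three_halves_eq_mul_sqrt (by linarith)]; nlinarith
  rw [Nat.succ_sub_one, pow_succ, mul_comm]
  exact mul_le_mul (pow_le_pow_left₀ (by linarith) h1 k) h2 (Real.sqrt_nonneg x) (by positivity)

theorem unitriangular_bounded_coeffs_conditioning_general (f : ℕ+) (d : ℕ)
    (A : Matrix (Fin d) (Fin d) (CyclotomicField f ℚ))
    (ζ : CyclotomicField f ℚ) (hζ : IsPrimitiveRoot ζ f)
    (hA : A.BlockTriangular id) (hdiag : ∀ i, A i i = 1)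
    (coeffs : Fin d → Fin d → Fin (Nat.totient (f : ℕ)) → ℚ)
    (hcoeffs : ∀ i j, A i j = ∑ k : Fin (Nat.totient (f : ℕ)),
      (coeffs i j k : CyclotomicField f ℚ) * ζ ^ (k : ℕ))
    (hbound : ∀ i j k, |coeffs i j k| ≤ 1) :
    ‖embMatrix A‖ ≤ (d : ℝ) * (Nat.totient (f : ℕ) : ℝ) ^ ((3 : ℝ) / 2) ∧
    ‖embMatrix A⁻¹‖ ≤ 3 * (d : ℝ) *
      (2 * (Nat.totient (f : ℕ) : ℝ) ^ ((3 : ℝ) / 2)) ^ d := by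
  have hn : (1 : ℝ) ≤ Nat.totient f := by exact_mod_cast Nat.totient_pos.mpr f.pos
  have hAentry (σ : CyclotomicField f ℚ →+* ℂ) (i j : Fin d) :
      ‖σ (A i j)‖ ≤ Nat.totient f :=
    hcoeffs i j ▸ norm_map_sum_rat_mul_pow_le σ hζ.pow_eq_one f.ne_zero _ (hbound i j)
  have hnormA := norm_embMatrix_le A (by positivity) hAentry
  have hnormB := norm_embMatrix_le A⁻¹ (by positivity)
    fun σ => Matrix.norm_map_inv_apply_le σ hA hdiag (hAentry σ)
  rw [card_embeddings_cyclotomicField] at hnormA hnormB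
  refine ⟨hnormA.trans_eq (by rw [rpow_three_halves_eq_mul_sqrt (by positivity)]; ring), hnormB.trans ?_⟩
  rcases eq_or_ne d 0 with rfl | hd
  · simp
  calc √(Nat.totient f : ℝ) * d * (1 + Nat.totient f) ^ (d - 1)
      = d * (√(Nat.totient f : ℝ) * (1 + Nat.totient f) ^ (d - 1)) := by ring
    _ ≤ d * (2 * (Nat.totient f : ℝ) ^ ((3 : ℝ) / 2)) ^ d := by
        gcongr
        exact sqrt_mul_one_add_pow_le hn hd
    _ ≤ 3 * d * (2 * (Nat.totient f : ℝ) ^ ((3 : ℝ) / 2)) ^ d := by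
        have : 0 ≤ (d : ℝ) * (2 * (Nat.totient f : ℝ) ^ ((3 : ℝ) / 2)) ^ d := by positivity
        linarith

/-- A unitriangular matrix over the cyclotomic field `ℚ(ζ_f)` whose entries have all their
power-basis coordinates bounded by `1` satisfies `‖A‖ ≤ d n^{3/2}` and
`‖A⁻¹‖ ≤ 3d (2 n^{3/2})^d` for the operator norm induced by the canonical embedding into
`ℂ^{nd}`. -/
theorem unitriangular_bounded_coeffs_conditioning (f : ℕ+) (hf : 3 ≤ (f : ℕ)) (d : ℕ)
    (A : Matrix (Fin d) (Fin d) (CyclotomicField f ℚ))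
    (ζ : CyclotomicField f ℚ) (hζ : IsPrimitiveRoot ζ f)
    (hA : A.BlockTriangular id) (hdiag : ∀ i, A i i = 1)
    (coeffs : Fin d → Fin d → Fin (Nat.totient (f : ℕ)) → ℚ)
    (hcoeffs : ∀ i j, A i j = ∑ k : Fin (Nat.totient (f : ℕ)),
      (coeffs i j k : CyclotomicField f ℚ) * ζ ^ (k : ℕ))
    (hbound : ∀ i j k, |coeffs i j k| ≤ 1) :
    ‖embMatrix A‖ ≤ (d : ℝ) * (Nat.totient (f : ℕ) : ℝ) ^ ((3 : ℝ) / 2) ∧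
    ‖embMatrix A⁻¹‖ ≤ 3 * (d : ℝ) *
      (2 * (Nat.totient (f : ℕ) : ℝ) ^ ((3 : ℝ) / 2)) ^ d :=
  unitriangular_bounded_coeffs_conditioning_general f d A ζ hζ hA hdiag coeffs hcoeffs hbound
end

section
/- Let f ≥ 3 be an integer. Then: (i) for every integer α with 1 ≤ α ≤ f−1 and gcd(α, f) = 1, one has |ln|1 − e^{2πiα/f}|| ≤ ln f; (ii) ∑_{α ∈ (ℤ/fℤ)^×} (ln|1 − e^{2πiα/f}|)² ≤ 4f, where the sum is over all residues 1 ≤ α ≤ f−1 coprime to f. -/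
/-!
Since `|1 - e^{2πix}| = 2|sin(πx)|`, Jordan's inequality puts `|1 - ζ_f^α|` between `4m/f`
and `2`, where `m = min(α, f - α) ≥ 1`; hence `|ln|1 - ζ_f^α|| ≤ ln(f/m) ≤ ln f`. For the sum
of squares, `ln(f/m)² ≤ ln(f/α)² + ln(f/(f-α))²`, and `∑_{1 ≤ k < n} ln(n/k)²` is at most its
first term `ln² n` plus `∫₁ⁿ ln(n/x)² dx = 2n - ln² n - 2 ln n - 2`, because `x ↦ ln(n/x)²`
decreases on `[1, n]`.
-/

open Real

theorem four_mul_min_le_two_mul_sin_pi_mul {x : ℝ} (h0 : 0 ≤ x) (h1 : x ≤ 1) :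
    4 * min x (1 - x) ≤ 2 * sin (π * x) := by
  have jordan : ∀ y : ℝ, 0 ≤ y → y ≤ 1 / 2 → 4 * y ≤ 2 * sin (π * y) := fun y hy0 hy1 => by
    have hsin := mul_le_sin (by positivity) (by nlinarith [pi_pos] : π * y ≤ π / 2)
    rw [← mul_assoc, div_mul_cancel₀ _ pi_ne_zero] at hsin
    linarith
  rcases le_total x (1 / 2) with hx | hx
  · rw [min_eq_left (by linarith)]
    exact jordan x h0 hx
  · rw [min_eq_right (by linarith), ← sin_pi_sub, ← mul_one_sub]
    exact jordan (1 - x) (by linarith) (by linarith)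

theorem abs_log_le_log_inv {a t : ℝ} (ht : 0 < t) (ht2 : t ≤ 1 / 2) (hta : t ≤ a)
    (ha : a ≤ 2) : |log a| ≤ log t⁻¹ := by
  refine abs_le.2 ⟨?_, ?_⟩
  · rw [log_inv, neg_neg]
    exact log_le_log ht hta
  · calc log a ≤ log 2 := log_le_log (by linarith) ha
      _ ≤ log t⁻¹ := log_le_log two_pos (by rw [le_inv_comm₀ two_pos ht]; linarith)

theorem norm_one_sub_exp_two_pi_I_mul (x : ℝ) :
    ‖1 - Complex.exp (2 * π * Complex.I * x)‖ = 2 * |sin (π * x)| := by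
  have hexp := Complex.norm_exp_I_mul_ofReal_sub_one (2 * π * x)
  push_cast at hexp
  rw [norm_sub_rev, show 2 * (π : ℂ) * Complex.I * x = Complex.I * (2 * π * x) by ring, hexp,
    norm_mul, Real.norm_eq_abs, Real.norm_eq_abs, abs_two]
  ring_nf

theorem abs_log_norm_one_sub_exp_two_pi_I_mul_le {x : ℝ} (h0 : 0 < x) (h1 : x < 1) :
    |log ‖1 - Complex.exp (2 * π * Complex.I * x)‖| ≤ log (min x (1 - x))⁻¹ := by
  rw [norm_one_sub_exp_two_pi_I_mul]
  have hmin : 0 < min x (1 - x) := lt_min h0 (by linarith)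
  refine abs_log_le_log_inv hmin (by grind) ?_ (by linarith [abs_sin_le_one (π * x)])
  linarith [four_mul_min_le_two_mul_sin_pi_mul h0.le h1.le, le_abs_self (sin (π * x))]

theorem abs_log_norm_one_sub_exp_le {f α : ℕ} (h1 : 1 ≤ α) (h2 : α < f) :
    |log ‖1 - Complex.exp (2 * π * Complex.I * α / f)‖| ≤ log (f / (min α (f - α) : ℕ)) := by
  have hf : (0 : ℝ) < f := Nat.cast_pos.2 (by omega)
  have hα : (0 : ℝ) < α / f := div_pos (by exact_mod_cast h1) hf
  have hα1 : (α : ℝ) / f < 1 := (div_lt_one hf).2 (by exact_mod_cast h2)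
  have harg : 2 * π * Complex.I * α / f = 2 * π * Complex.I * ((α / f : ℝ) : ℂ) := by
    push_cast; ring
  have hmin : (min ((α : ℝ) / f) (1 - α / f))⁻¹ = f / (min α (f - α) : ℕ) := by
    rw [Nat.cast_min, Nat.cast_sub h2.le, one_sub_div hf.ne', min_div_div_right hf.le, inv_div]
  rw [harg, ← hmin]
  exact abs_log_norm_one_sub_exp_two_pi_I_mul_le hα hα1

theorem integral_log_div_sq {c : ℝ} (hc : 0 < c) :
    ∫ x in (1 : ℝ)..c, log (c / x) ^ 2 = 2 * c - log c ^ 2 - 2 * log c - 2 := by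
  have hpos : ∀ x ∈ Set.uIcc 1 c, 0 < x := fun x hx =>
    lt_of_lt_of_le (lt_min one_pos hc) hx.1
  have hderiv : ∀ x ∈ Set.uIcc 1 c, HasDerivAt
      (fun x => x * ((log c - log x) ^ 2 + 2 * (log c - log x) + 2)) (log (c / x) ^ 2) x := by
    intro x hx
    have hx := (hpos x hx).ne'
    have hlog := ((hasDerivAt_log hx).const_sub (log c))
    refine ((hasDerivAt_id x).mul
      (((hlog.pow 2).add (hlog.const_mul 2)).add_const 2)).congr_deriv ?_
    simp only [id, Pi.add_apply, Pi.pow_apply, log_div hc.ne' hx]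
    field_simp
    ring
  have hint : IntervalIntegrable (fun x => log (c / x) ^ 2) MeasureTheory.volume 1 c :=
    (ContinuousOn.pow (ContinuousOn.log (continuousOn_const.div continuousOn_id
      fun x hx => (hpos x hx).ne') fun x hx => (div_pos hc (hpos x hx)).ne') 2).intervalIntegrable
  rw [intervalIntegral.integral_eq_sub_of_hasDerivAt hderiv hint]
  simp only [log_one]
  ring

theorem sum_Ico_log_div_sq_le (n : ℕ) : ∑ k ∈ Finset.Ico 1 n, log (n / k) ^ 2 ≤ 2 * n := by
  rcases Nat.eq_zero_or_pos n with rfl | hn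
  · simp
  have hn' : (1 : ℝ) ≤ n := Nat.one_le_cast.2 hn
  have hanti : AntitoneOn (fun x : ℝ => log (n / x) ^ 2) (Set.Icc (1 : ℕ) n) := by
    intro x hx y hy hxy
    rw [Set.mem_Icc, Nat.cast_one] at hx hy
    have hx0 : 0 < x := by linarith
    have hny : 0 ≤ log (n / y) := log_nonneg ((one_le_div (by linarith)).2 hy.2)
    have hlog : log (n / y) ≤ log (n / x) :=
      log_le_log (div_pos (by linarith) (by linarith))
        (div_le_div_of_nonneg_left (by linarith) hx0 hxy)
    exact pow_le_pow_left₀ hny hlog 2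
  calc ∑ k ∈ Finset.Ico 1 n, log (n / k) ^ 2
      ≤ ∑ k ∈ Finset.Ico 1 (n + 1), log (n / k) ^ 2 :=
        Finset.sum_le_sum_of_subset_of_nonneg (Finset.Ico_subset_Ico_right (by omega))
          fun _ _ _ => sq_nonneg _
    _ = log n ^ 2 + ∑ k ∈ Finset.Ico 1 n, log (n / ((k + 1 : ℕ) : ℝ)) ^ 2 := by
        rw [Finset.sum_eq_sum_Ico_succ_bot (by omega),
          Finset.sum_Ico_add' (fun k : ℕ => log (n / (k : ℝ)) ^ 2)]
        simp
    _ ≤ log n ^ 2 + ∫ x in (1 : ℝ)..n, log (n / x) ^ 2 := by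
        gcongr
        simpa using hanti.sum_le_integral_Ico hn
    _ = 2 * n - 2 * log n - 2 := by rw [integral_log_div_sq (by linarith)]; ring
    _ ≤ 2 * n := by linarith [log_nonneg hn']

theorem sq_log_norm_one_sub_exp_le {f α : ℕ} (h1 : 1 ≤ α) (h2 : α < f) :
    log ‖1 - Complex.exp (2 * π * Complex.I * α / f)‖ ^ 2 ≤
      log (f / α) ^ 2 + log (f / (f - α : ℕ)) ^ 2 := by
  have hbound := abs_log_norm_one_sub_exp_le h1 h2
  calc log ‖1 - Complex.exp (2 * π * Complex.I * α / f)‖ ^ 2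
      = |log ‖1 - Complex.exp (2 * π * Complex.I * α / f)‖| ^ 2 := (sq_abs _).symm
    _ ≤ log (f / (min α (f - α) : ℕ)) ^ 2 := pow_le_pow_left₀ (abs_nonneg _) hbound 2
    _ ≤ log (f / α) ^ 2 + log (f / (f - α : ℕ)) ^ 2 := by
        rcases min_cases α (f - α) with ⟨hmin, -⟩ | ⟨hmin, -⟩ <;> rw [hmin] <;>
          linarith [sq_nonneg (log (f / α)), sq_nonneg (log (f / (f - α : ℕ)))]

theorem sum_Ico_sq_log_norm_one_sub_exp_le (f : ℕ) :
    ∑ α ∈ Finset.Ico 1 f, log ‖1 - Complex.exp (2 * π * Complex.I * α / f)‖ ^ 2 ≤ 4 * f := by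
  calc ∑ α ∈ Finset.Ico 1 f, log ‖1 - Complex.exp (2 * π * Complex.I * α / f)‖ ^ 2
      ≤ ∑ α ∈ Finset.Ico 1 f, (log (f / α) ^ 2 + log (f / (f - α : ℕ)) ^ 2) :=
        Finset.sum_le_sum fun α hα =>
          sq_log_norm_one_sub_exp_le (Finset.mem_Ico.1 hα).1 (Finset.mem_Ico.1 hα).2
    _ = 2 * ∑ α ∈ Finset.Ico 1 f, log (f / α) ^ 2 := by
        rw [Finset.sum_add_distrib,
          Finset.sum_Ico_reflect (fun k : ℕ => log (f / (k : ℝ)) ^ 2) 1 f.le_succ]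
        simp only [Nat.add_sub_cancel_left, Nat.add_sub_cancel]
        ring
    _ ≤ 4 * f := by linarith [sum_Ico_log_div_sq_le f]

/-- Bounds on the logarithmic embedding of `ζ_f − 1`: each coordinate
`ln|1 − e^{2πiα/f}|` is at most `ln f` in absolute value, and the sum of their squares over
`(ℤ/fℤ)^×` is at most `4f`. -/
theorem log_embedding_of_zeta_sub_one_bounds (f : ℕ) (hf : 3 ≤ f) :
    (∀ α : ℕ, 1 ≤ α → α ≤ f - 1 → Nat.gcd α f = 1 →
      |Real.log (norm
        (1 - Complex.exp (2 * (Real.pi : ℂ) * Complex.I * (α : ℂ) / (f : ℂ))))| ≤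
        Real.log f) ∧
    (∑ α ∈ (Finset.range f).filter (fun α => Nat.gcd α f = 1),
      Real.log (norm
        (1 - Complex.exp (2 * (Real.pi : ℂ) * Complex.I * (α : ℂ) / (f : ℂ)))) ^ 2 ≤
        4 * (f : ℝ)) := by
  refine ⟨fun α h1 h2 _ => ?_, ?_⟩
  · have hmin : 1 ≤ min α (f - α) := le_min h1 (by omega)
    calc |log ‖1 - Complex.exp (2 * π * Complex.I * α / f)‖|
        ≤ log (f / (min α (f - α) : ℕ)) := abs_log_norm_one_sub_exp_le h1 (by omega)
      _ ≤ log f := log_le_log (div_pos (by positivity) (by positivity))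
          (div_le_self (by positivity) (Nat.one_le_cast.2 hmin))
  · have hsub : (Finset.range f).filter (fun α => Nat.gcd α f = 1) ⊆ Finset.Ico 1 f := by
      intro α hα
      rw [Finset.mem_filter, Finset.mem_range] at hα
      rw [Finset.mem_Ico]
      refine ⟨Nat.pos_of_ne_zero fun h0 => ?_, hα.1⟩
      rw [h0, Nat.gcd_zero_left] at hα
      omega
    exact (Finset.sum_le_sum_of_subset_of_nonneg hsub fun _ _ _ => sq_nonneg _).trans
      (sum_Ico_sq_log_norm_one_sub_exp_le f)
end

section
/- Let f ≥ 3 be an integer and K = ℚ(ζ_f) the f-th cyclotomic field with Galois group Gal(K/ℚ). Then the subgroup of K^× generated by −1, ζ_f, and all elements 1 − ζ_f^b for integers b with f ∤ b, is equal to the subgroup of K^× generated by −1, ζ_f, and all elements σ(1 − ζ_f^a) where σ ranges over Gal(K/ℚ) and a ranges over the unitary divisors of f other than f itself (i.e. a | f, gcd(a, f/a) = 1, a ≠ f). Consequently, the group of cyclotomic units (the units of O_K lying in the first subgroup) equals the group of units of O_K lying in the second subgroup. -/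
/-- The set of units of `K` whose value is `−1`, `ζ_f`, or `1 − ζ_f^b` for some integer `b`
not divisible by `f`. -/
def cycGenSet1 (f : ℕ+) {K : Type*} [Field K] (ζ : K) : Set Kˣ :=
  {u : Kˣ | (u : K) = -1 ∨ (u : K) = ζ ∨
    ∃ b : ℤ, ¬ ((f : ℤ) ∣ b) ∧ (u : K) = 1 - ζ ^ b}

/-- The set of units of `K` whose value is `−1`, `ζ_f`, or `σ(1 − ζ_f^a)` for a Galois
automorphism `σ` and a unitary divisor `a ≠ f` of `f`. -/
def cycGenSet2 (f : ℕ+) {K : Type*} [Field K] [Algebra ℚ K] (ζ : K) : Set Kˣ :=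
  {u : Kˣ | (u : K) = -1 ∨ (u : K) = ζ ∨
    ∃ (σ : K ≃ₐ[ℚ] K) (a : ℕ), a ∣ (f : ℕ) ∧ Nat.gcd a ((f : ℕ) / a) = 1 ∧
      a ≠ (f : ℕ) ∧ (u : K) = σ (1 - ζ ^ a)}

/-!
One inclusion is immediate: `σ (1 - ζ ^ a) = 1 - ζ ^ (i * a)` with `i` prime to `f`, and
`f ∤ i * a` because `a ≠ f`. Conversely, `1 - ζ ^ b = 1 - η` with `η` a primitive `m`-th root of
unity, `1 < m ∣ f`. Every primitive `m`-th root of unity is the `(f / m)`-th power of a primitive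
`f`-th root, so when `m` and `f / m` are coprime, `1 - η` is a Galois conjugate of
`1 - ζ ^ (f / m)`. Otherwise a prime `p` divides both, and the distribution relation
`1 - θ ^ p = ∏_{ω ^ p = 1} (1 - ω θ)` writes `1 - η` as a product of elements `1 - η'` with `η'`
primitive of order `p * m`; induct on `f / m`.
-/

open Polynomial

namespace IsPrimitiveRoot

theorem of_pow_of_prime_dvd {M : Type*} [CommMonoid M] {x : M} {p m : ℕ} (hp : p.Prime)
    (hpm : p ∣ m) (h : IsPrimitiveRoot (x ^ p) m) : IsPrimitiveRoot x (p * m) := by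
  have hm : m = orderOf x / (orderOf x).gcd p := by
    rw [h.eq_orderOf, orderOf_pow' x hp.ne_zero]
  by_cases hpx : p ∣ orderOf x
  · rw [Nat.gcd_eq_right hpx] at hm
    rw [hm, Nat.mul_div_cancel' hpx]
    exact IsPrimitiveRoot.orderOf x
  · rw [Nat.Coprime.gcd_eq_one ((Nat.Prime.coprime_iff_not_dvd hp).2 hpx).symm,
      Nat.div_one] at hm
    exact absurd (hm ▸ hpm) hpx

theorem mul_of_mem_nthRootsFinset {R : Type*} [CommRing R] [IsDomain R] {θ ω : R} {p m : ℕ}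
    (hp : p.Prime) (hpm : p ∣ m) (hθ : IsPrimitiveRoot (θ ^ p) m)
    (hω : ω ∈ nthRootsFinset p (1 : R)) : IsPrimitiveRoot (ω * θ) (p * m) := by
  refine of_pow_of_prime_dvd hp hpm ?_
  rwa [mul_pow, (Polynomial.mem_nthRootsFinset hp.pos 1).1 hω, one_mul]

theorem one_sub_pow_eq_prod {R : Type*} [CommRing R] [IsDomain R] {θ : R} {p m : ℕ}
    (hp : p.Prime) (hpm : p ∣ m) (hm : 0 < m) (hθ : IsPrimitiveRoot (θ ^ p) m) :
    1 - θ ^ p = ∏ ω ∈ nthRootsFinset p (1 : R), (1 - ω * θ) := by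
  have hθm : IsPrimitiveRoot (θ ^ m) p :=
    (of_pow_of_prime_dvd hp hpm hθ).pow (Nat.mul_pos hp.pos hm) (mul_comm p m)
  simpa using hθm.pow_sub_pow_eq_prod_sub_mul 1 θ hp.pos

theorem exists_pow_div_eq {R : Type*} [CommRing R] [IsDomain R] {ζ η : R} {n m : ℕ}
    (hζ : IsPrimitiveRoot ζ n) (hη : IsPrimitiveRoot η m) (hn : n ≠ 0) (hmn : m ∣ n) :
    ∃ ξ, IsPrimitiveRoot ξ n ∧ ξ ^ (n / m) = η := by
  have : NeZero n := ⟨hn⟩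
  have : NeZero m := ⟨fun h => hn (Nat.eq_zero_of_zero_dvd (h ▸ hmn))⟩
  have hζm : IsPrimitiveRoot (ζ ^ (n / m)) m :=
    hζ.pow (Nat.pos_of_ne_zero hn) (Nat.div_mul_cancel hmn).symm
  obtain ⟨c, -, hc⟩ := hζm.eq_pow_of_pow_eq_one hη.pow_eq_one
  have hcm : c.Coprime m := (hζm.pow_iff_coprime (NeZero.pos m) c).1 (hc ▸ hη)
  obtain ⟨t, ht⟩ := ZMod.unitsMap_surjective hmn (ZMod.unitOfCoprime c hcm)
  have htc : (t : ZMod n).val ≡ c [MOD m] := by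
    rw [← ZMod.natCast_eq_natCast_iff, ← ZMod.cast_eq_val]
    exact congrArg Units.val ht
  refine ⟨ζ ^ (t : ZMod n).val, hζ.pow_of_coprime _ (ZMod.val_coe_unit_coprime t), ?_⟩
  rw [← hc, ← pow_mul, mul_comm, pow_mul,
    (hζm.isOfFinOrder (NeZero.ne m)).pow_eq_pow_iff_modEq, ← hζm.eq_orderOf]
  exact htc

theorem exists_dvd_isPrimitiveRoot_zpow {K : Type*} [Field K] {ζ : K} {n : ℕ} {b : ℤ}
    (hζ : IsPrimitiveRoot ζ n) (hn : n ≠ 0) (hb : ¬ (n : ℤ) ∣ b) :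
    ∃ m, m ∣ n ∧ 1 < m ∧ IsPrimitiveRoot (ζ ^ b) m := by
  have hdvd : orderOf (ζ ^ b) ∣ n := by
    refine orderOf_dvd_of_pow_eq_one ?_
    rw [← zpow_natCast, ← zpow_mul, mul_comm, zpow_mul, hζ.zpow_eq_one, one_zpow]
  have hne : orderOf (ζ ^ b) ≠ 1 := by
    rw [Ne, orderOf_eq_one_iff, hζ.zpow_eq_one_iff_dvd]
    exact hb
  have hpos : orderOf (ζ ^ b) ≠ 0 := fun h => hn (Nat.eq_zero_of_zero_dvd (h ▸ hdvd))
  exact ⟨_, hdvd, by omega, IsPrimitiveRoot.orderOf _⟩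

end IsPrimitiveRoot

theorem IsCyclotomicExtension.exists_algEquiv_apply_eq {n : ℕ} [NeZero n] {K L : Type*} [Field K]
    [Field L] [Algebra K L] [IsCyclotomicExtension {n} K L] (h : Irreducible (cyclotomic n K))
    {ζ ξ : L} (hζ : IsPrimitiveRoot ζ n) (hξ : IsPrimitiveRoot ξ n) :
    ∃ σ : L ≃ₐ[K] L, σ ζ = ξ := by
  refine ⟨(fromZetaAut hζ h).symm.trans (fromZetaAut hξ h), ?_⟩
  rw [AlgEquiv.trans_apply, (AlgEquiv.symm_apply_eq _).2 (fromZetaAut_spec hζ h).symm,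
    fromZetaAut_spec]

theorem Submonoid.one_sub_mem_of_forall_coprime {R : Type*} [CommRing R] [IsDomain R]
    {ζ : R} {n : ℕ} (hζ : IsPrimitiveRoot ζ n) (hn : n ≠ 0) (S : Submonoid R)
    (hS : ∀ m η, m ∣ n → 1 < m → m.Coprime (n / m) → IsPrimitiveRoot η m → 1 - η ∈ S)
    {m : ℕ} {η : R} (hmn : m ∣ n) (hm : 1 < m) (hη : IsPrimitiveRoot η m) : 1 - η ∈ S := by
  induction hk : n / m using Nat.strong_induction_on generalizing m η with
  | _ k ih =>
  by_cases hcop : m.Coprime (n / m)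
  · exact hS m η hmn hm hcop hη
  obtain ⟨p, hp, hpm, hpk⟩ := Nat.Prime.not_coprime_iff_dvd.1 hcop
  have hpmn : p * m ∣ n := by
    rw [mul_comm]
    exact Nat.mul_dvd_of_dvd_div hmn hpk
  obtain ⟨ξ, hξ, rfl⟩ := hζ.exists_pow_div_eq hη hn hmn
  have hpow : (ξ ^ (n / (p * m))) ^ p = ξ ^ (n / m) := by
    rw [← pow_mul, mul_comm p m, ← Nat.div_div_eq_div_mul, Nat.div_mul_cancel hpk]
  rw [← hpow] at hη ⊢
  rw [IsPrimitiveRoot.one_sub_pow_eq_prod hp hpm (by omega) hη]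
  refine S.prod_mem fun ω hω => ih (n / (p * m)) ?_ hpmn (by nlinarith [hp.two_le])
    (IsPrimitiveRoot.mul_of_mem_nthRootsFinset hp hpm hη hω) rfl
  rw [← hk, mul_comm p m, ← Nat.div_div_eq_div_mul]
  exact Nat.div_lt_self (Nat.div_pos (Nat.le_of_dvd (Nat.pos_of_ne_zero hn) hmn) (by omega))
    hp.one_lt

section CyclotomicUnits

variable {f : ℕ+} {K : Type*} [Field K] [Algebra ℚ K] {ζ : K}

theorem cycGenSet2_subset_cycGenSet1 (hζ : IsPrimitiveRoot ζ f) :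
    cycGenSet2 f ζ ⊆ cycGenSet1 f ζ := by
  rintro u (h | h | ⟨σ, a, ha, -, haf, hu⟩)
  · exact Or.inl h
  · exact Or.inr (Or.inl h)
  have hσζ : IsPrimitiveRoot (σ ζ) f := hζ.map_of_injective σ.injective
  obtain ⟨i, -, hi⟩ := hζ.eq_pow_of_pow_eq_one hσζ.pow_eq_one
  have hi_cop : i.Coprime f := (hζ.pow_iff_coprime f.pos i).1 (hi ▸ hσζ)
  refine Or.inr (Or.inr ⟨(i * a : ℕ), fun hdvd => haf (Nat.dvd_antisymm ha ?_), ?_⟩)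
  · exact hi_cop.symm.dvd_of_dvd_mul_left (Int.natCast_dvd_natCast.1 hdvd)
  · rw [hu, zpow_natCast, map_sub, map_one, map_pow, ← hi, ← pow_mul]

variable [IsCyclotomicExtension {(f : ℕ)} ℚ K]

theorem one_sub_mem_closure_cycGenSet2_of_coprime (hζ : IsPrimitiveRoot ζ f) {m : ℕ} {η : K}
    (hmf : m ∣ f) (hm : 1 < m) (hcop : m.Coprime (f / m)) (hη : IsPrimitiveRoot η m) :
    1 - η ∈ (Subgroup.closure (cycGenSet2 f ζ)).toSubmonoid.map (Units.coeHom K) := by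
  obtain ⟨ξ, hξ, rfl⟩ := hζ.exists_pow_div_eq hη f.ne_zero hmf
  obtain ⟨σ, hσ⟩ := IsCyclotomicExtension.exists_algEquiv_apply_eq
    (cyclotomic.irreducible_rat f.pos) hζ hξ
  refine Submonoid.mem_map.2 ⟨Units.mk0 _ (sub_ne_zero.2 (hη.ne_one hm).symm),
    Subgroup.subset_closure (Or.inr (Or.inr ⟨σ, f / m, Nat.div_dvd_of_dvd hmf, ?_, ?_, ?_⟩)), rfl⟩
  · rw [Nat.div_div_self hmf f.ne_zero]
    exact hcop.symm
  · exact (Nat.div_lt_self f.pos hm).ne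
  · simp [hσ]

theorem cycGenSet1_subset_closure_cycGenSet2 (hζ : IsPrimitiveRoot ζ f) :
    cycGenSet1 f ζ ⊆ Subgroup.closure (cycGenSet2 f ζ) := by
  rintro u (h | h | ⟨b, hb, hu⟩)
  · exact Subgroup.subset_closure (Or.inl h)
  · exact Subgroup.subset_closure (Or.inr (Or.inl h))
  obtain ⟨m, hmf, hm, hη⟩ := hζ.exists_dvd_isPrimitiveRoot_zpow f.ne_zero hb
  obtain ⟨v, hv, hvu⟩ := Submonoid.mem_map.1 <| Submonoid.one_sub_mem_of_forall_coprime hζ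
    f.ne_zero _ (fun _ _ => one_sub_mem_closure_cycGenSet2_of_coprime hζ) hmf hm hη
  rwa [← Units.ext (hvu.trans hu.symm)]

end CyclotomicUnits

theorem cyclotomic_units_generated_by_unitary_divisors_general (f : ℕ+)
    (K : Type*) [Field K] [Algebra ℚ K] [IsCyclotomicExtension {(f : ℕ)} ℚ K]
    (ζ : K) (hζ : IsPrimitiveRoot ζ f) :
    Subgroup.closure (cycGenSet1 f ζ) = Subgroup.closure (cycGenSet2 f ζ) ∧
    {u : Kˣ | u ∈ Subgroup.closure (cycGenSet1 f ζ) ∧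
        IsIntegral ℤ (u : K) ∧ IsIntegral ℤ ((u⁻¹ : Kˣ) : K)} =
      {u : Kˣ | u ∈ Subgroup.closure (cycGenSet2 f ζ) ∧
        IsIntegral ℤ (u : K) ∧ IsIntegral ℤ ((u⁻¹ : Kˣ) : K)} := by
  have hclosure : Subgroup.closure (cycGenSet1 f ζ) = Subgroup.closure (cycGenSet2 f ζ) :=
    le_antisymm ((Subgroup.closure_le _).2 (cycGenSet1_subset_closure_cycGenSet2 hζ))
      (Subgroup.closure_mono (cycGenSet2_subset_cycGenSet1 hζ))
  exact ⟨hclosure, by rw [hclosure]⟩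

/-- Reduction of the generators of the cyclotomic units: the subgroup of `K^×` generated by
`−1`, `ζ_f` and the `1 − ζ_f^b` (for `f ∤ b`) coincides with the subgroup generated by `−1`,
`ζ_f` and the Galois orbits of `1 − ζ_f^a` for `a` a unitary divisor of `f`, `a ≠ f`.
Consequently the cyclotomic units (elements of the first subgroup that are units of `O_K`)
coincide with the units of `O_K` in the second subgroup. -/
theorem cyclotomic_units_generated_by_unitary_divisors (f : ℕ+) (hf : 3 ≤ (f : ℕ))
    (K : Type*) [Field K] [Algebra ℚ K] [IsCyclotomicExtension {(f : ℕ)} ℚ K]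
    (ζ : K) (hζ : IsPrimitiveRoot ζ f) :
    Subgroup.closure (cycGenSet1 f ζ) = Subgroup.closure (cycGenSet2 f ζ) ∧
    {u : Kˣ | u ∈ Subgroup.closure (cycGenSet1 f ζ) ∧
        IsIntegral ℤ (u : K) ∧ IsIntegral ℤ ((u⁻¹ : Kˣ) : K)} =
      {u : Kˣ | u ∈ Subgroup.closure (cycGenSet2 f ζ) ∧
        IsIntegral ℤ (u : K) ∧ IsIntegral ℤ ((u⁻¹ : Kˣ) : K)} :=
  cyclotomic_units_generated_by_unitary_divisors_general f K ζ hζ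
end

section
/- Let p be a prime, d ≥ 2, and A a d × d integer matrix. Set c = p·d·2^{2d−1} and let L be the 2d × 2d integer matrix with block form [[c·p·Id_d, c·A], [0, Id_d]]. Let U be a 2d × 2d integer matrix with det U = ±1, let M = L·U, let m₁, …, m_{2d} ∈ ℝ^{2d} be the columns of M, and let g₁, …, g_{2d} be their Gram–Schmidt orthogonalization. Assume the basis is reduced in the sense that ‖g_i‖ ≤ 2‖g_{i+1}‖ for all 1 ≤ i < 2d. Let 0 ≤ k ≤ 2d be such that for every j ≤ k the first d coordinates of m_j are all zero, and (if k < 2d) some of the first d coordinates of m_{k+1} is nonzero. Then for every x ∈ (ℤ/pℤ)^d with (A mod p)·x = 0, x lies in the (ℤ/pℤ)-span of the reductions modulo p of the vectors of last d coordinates of m₁, …, m_k. -/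
/-!
Lift a kernel vector `x` of `A mod p` to `z ∈ [0, p)^d`. Since `p ∣ A z`, the vector `(0, z)` lies in
the lattice spanned by the columns of `L`, hence `(0, z) = M a` with `a` integral, and
`‖(0, z)‖ < p d`. The upper coordinates of every lattice vector are divisible by `c`, so the
Gram–Schmidt vector `g_{k+1}` has a coordinate of size at least `c`, and reducedness gives
`‖g_t‖ ≥ c / 2^{2d-1} = p d` for all `t > k`. An integral combination `∑ a_j m_j` shorter than every
`g_t` with `t > k` has `a_t = 0` for `t > k`: pairing it with `g_t` for the last `t` with `a_t ≠ 0`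
gives `|a_t| ‖g_t‖² ≤ ‖∑ a_j m_j‖ ‖g_t‖`. Reducing `(0, z) = ∑_{j ≤ k} a_j m_j` modulo `p` gives the
claim.
-/

instance (n : ℕ) : WellFoundedLT (Fin n) := inferInstance

open Finset InnerProductSpace Matrix

section GramSchmidt

variable {E ι : Type*} [NormedAddCommGroup E] [InnerProductSpace ℝ E]
  [LinearOrder ι] [LocallyFiniteOrderBot ι] [WellFoundedLT ι]

theorem inner_gramSchmidt_self (f : ι → E) (t : ι) :
    inner ℝ (gramSchmidt ℝ f t) (f t) = ‖gramSchmidt ℝ f t‖ ^ 2 := by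
  conv_lhs => rw [gramSchmidt_def'' ℝ f t]
  rw [inner_add_right, inner_sum, real_inner_self_eq_norm_sq, add_eq_left]
  refine sum_eq_zero fun i hi => ?_
  rw [inner_smul_right, gramSchmidt_orthogonal ℝ f (mem_Iio.mp hi).ne', mul_zero]

theorem map_gramSchmidt_eq_zero {F : Type*} [AddCommGroup F] [Module ℝ F] (φ : E →ₗ[ℝ] F)
    (f : ι → E) {t : ι} (hf : ∀ j ≤ t, φ (f j) = 0) : φ (gramSchmidt ℝ f t) = 0 := by
  have hle : Submodule.span ℝ (f '' Set.Iic t) ≤ LinearMap.ker φ :=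
    Submodule.span_le.mpr <| by rintro _ ⟨j, hj, rfl⟩; exact hf j hj
  exact hle (gramSchmidt_mem_span ℝ f le_rfl)

theorem map_gramSchmidt_eq_map {F : Type*} [AddCommGroup F] [Module ℝ F] (φ : E →ₗ[ℝ] F)
    (f : ι → E) {t : ι} (hf : ∀ j < t, φ (f j) = 0) : φ (gramSchmidt ℝ f t) = φ (f t) := by
  conv_rhs => rw [gramSchmidt_def'' ℝ f t]
  rw [map_add, map_sum, add_eq_left.mpr]
  refine sum_eq_zero fun j hj => ?_
  rw [map_smul, map_gramSchmidt_eq_zero φ f fun i hi => hf i (hi.trans_lt (mem_Iio.mp hj)),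
    smul_zero]

theorem abs_apply_le_norm_gramSchmidt {κ : Type*} [Fintype κ] (f : ι → EuclideanSpace ℝ κ)
    {t : ι} {i : κ} (hf : ∀ j < t, f j i = 0) : |f t i| ≤ ‖gramSchmidt ℝ f t‖ := by
  have h := map_gramSchmidt_eq_map (EuclideanSpace.proj i : EuclideanSpace ℝ κ →L[ℝ] ℝ).toLinearMap
    f hf
  simp only [ContinuousLinearMap.coe_coe, PiLp.proj_apply] at h
  rw [← h, ← Real.norm_eq_abs]
  exact PiLp.norm_apply_le _ i

theorem eq_zero_of_norm_sum_lt_norm_gramSchmidt [Fintype ι] (f : ι → E) (a : ι → ℤ) {t : ι}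
    (ha : ∀ j, t < j → a j = 0)
    (hlt : ‖∑ j, (a j : ℝ) • f j‖ < ‖gramSchmidt ℝ f t‖) : a t = 0 := by
  set g := gramSchmidt ℝ f t
  have hinner : inner ℝ (∑ j, (a j : ℝ) • f j) g = a t * ‖g‖ ^ 2 := by
    rw [sum_inner, sum_eq_single t]
    · rw [real_inner_smul_left, real_inner_comm, inner_gramSchmidt_self]
    · intro j _ hjt
      rcases hjt.lt_or_gt with hjt | hjt
      · rw [real_inner_smul_left, real_inner_comm, gramSchmidt_inv_triangular ℝ f hjt, mul_zero]
      · rw [ha j hjt, Int.cast_zero, zero_smul, inner_zero_left]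
    · exact fun h => absurd (mem_univ t) h
  have hg : 0 < ‖g‖ := (norm_nonneg _).trans_lt hlt
  have hCS := abs_real_inner_le_norm (∑ j, (a j : ℝ) • f j) g
  rw [hinner, abs_mul, abs_of_nonneg (sq_nonneg ‖g‖)] at hCS
  have : |(a t : ℝ)| < 1 := by
    by_contra! h1
    nlinarith [mul_le_mul_of_nonneg_right h1 (sq_nonneg ‖g‖)]
  exact Int.abs_lt_one_iff.mp (by exact_mod_cast this)

theorem eq_zero_of_norm_sum_lt_norm_gramSchmidt_of_isUpperSet [Fintype ι]
    (f : ι → E) (a : ι → ℤ) {s : Set ι} (hs : IsUpperSet s)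
    (hlt : ∀ t ∈ s, ‖∑ j, (a j : ℝ) • f j‖ < ‖gramSchmidt ℝ f t‖) : ∀ t ∈ s, a t = 0 := by
  intro t
  induction t using WellFoundedGT.induction with
  | _ t ih =>
    intro ht
    exact eq_zero_of_norm_sum_lt_norm_gramSchmidt f a
      (fun j hj => ih j hj (hs hj.le ht)) (hlt t ht)

end GramSchmidt

theorem le_pow_mul_of_le_mul_succ {n : ℕ} {r : ℝ} (hr : 0 ≤ r) (u : Fin n → ℝ)
    (hu : ∀ (i : Fin n) (h : (i : ℕ) + 1 < n), u i ≤ r * u ⟨i + 1, h⟩) {i j : Fin n} (hij : i ≤ j) :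
    u i ≤ r ^ (j - i : ℕ) * u j := by
  obtain ⟨j, hj⟩ := j
  obtain ⟨s, rfl⟩ : ∃ s, j = i + s := ⟨j - i, by simp only [Fin.le_def] at hij; omega⟩
  induction s with
  | zero => simp
  | succ s ih =>
    calc u i ≤ r ^ s * u ⟨i + s, by omega⟩ := by simpa using ih (by omega) (by simp [Fin.le_def])
      _ ≤ r ^ s * (r * u ⟨i + (s + 1), hj⟩) :=
        mul_le_mul_of_nonneg_left (hu ⟨i + s, by omega⟩ (by simp; omega)) (pow_nonneg hr s)
      _ = r ^ (i + (s + 1) - i : ℕ) * u ⟨i + (s + 1), hj⟩ := by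
        rw [Nat.add_sub_cancel_left, pow_succ]; ring

theorem le_norm_gramSchmidt_of_reduced {n : ℕ} {κ : Type*} [Fintype κ]
    (f : Fin n → EuclideanSpace ℝ κ)
    (hred : ∀ (i : Fin n) (h : (i : ℕ) + 1 < n),
      ‖gramSchmidt ℝ f i‖ ≤ 2 * ‖gramSchmidt ℝ f ⟨(i : ℕ) + 1, h⟩‖)
    {k t : Fin n} (hkt : k ≤ t) {i : κ} (hf : ∀ j < k, f j i = 0) {B : ℝ}
    (hB : 2 ^ (n - 1) * B ≤ |f k i|) : B ≤ ‖gramSchmidt ℝ f t‖ := by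
  have hpow : (2 : ℝ) ^ (t - k : ℕ) ≤ 2 ^ (n - 1) := pow_le_pow_right₀ one_le_two (by omega)
  have := calc 2 ^ (n - 1) * B ≤ |f k i| := hB
    _ ≤ ‖gramSchmidt ℝ f k‖ := abs_apply_le_norm_gramSchmidt f hf
    _ ≤ 2 ^ (t - k : ℕ) * ‖gramSchmidt ℝ f t‖ :=
      le_pow_mul_of_le_mul_succ zero_le_two (‖gramSchmidt ℝ f ·‖) hred hkt
    _ ≤ 2 ^ (n - 1) * ‖gramSchmidt ℝ f t‖ := by gcongr
  exact le_of_mul_le_mul_left this (by positivity)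

theorem sum_intCast_smul_apply {ι κ : Type*} [Fintype ι] {M : Matrix κ ι ℤ}
    {f : ι → EuclideanSpace ℝ κ} (hf : ∀ j i, f j i = (M i j : ℝ)) (a : ι → ℤ) (i : κ) :
    (∑ j, (a j : ℝ) • f j) i = ((M *ᵥ a) i : ℝ) := by
  simp [hf, mulVec, dotProduct, mul_comm]

theorem sum_smul_mem_span_of_forall_not_eq_zero {R M ι : Type*} [Semiring R] [AddCommMonoid M]
    [Module R M] [Fintype ι] (a : ι → R) (u : ι → M) {P : ι → Prop} (ha : ∀ j, ¬ P j → a j = 0) :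
    ∑ j, a j • u j ∈ Submodule.span R {v | ∃ j, P j ∧ v = u j} := by
  refine Submodule.sum_mem _ fun j _ => ?_
  by_cases hj : P j
  · exact Submodule.smul_mem _ _ (Submodule.subset_span ⟨j, hj, rfl⟩)
  · rw [ha j hj, zero_smul]
    exact Submodule.zero_mem _

theorem intCast_mulVec_comp_eq_sum_smul {R m n l : Type*} [Ring R] [Fintype n]
    (M : Matrix m n ℤ) (a : n → ℤ) (r : l → m) :
    (fun i => ((M *ᵥ a) (r i) : R)) = ∑ j, (a j : R) • fun i => (M (r i) j : R) := by
  ext i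
  simp [mulVec, dotProduct, Finset.sum_apply, mul_comm]

theorem dvd_mulVec_val_of_map_mulVec_eq_zero {p : ℕ} [NeZero p] {m n : Type*} [Fintype n]
    {A : Matrix m n ℤ} {x : n → ZMod p} (hx : A.map (Int.cast : ℤ → ZMod p) *ᵥ x = 0) (i : m) :
    (p : ℤ) ∣ (A *ᵥ fun j => ((x j).val : ℤ)) i := by
  rw [← ZMod.intCast_zmod_eq_zero_iff_dvd, ← eq_intCast (Int.castRingHom (ZMod p)),
    RingHom.map_mulVec]
  simpa [Function.comp_def] using congrFun hx i

theorem EuclideanSpace.norm_lt_mul_of_castAdd_eq_zero {d : ℕ} (hd : 0 < d)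
    {v : EuclideanSpace ℝ (Fin (d + d))} {B : ℝ} (h0 : ∀ i, v (Fin.castAdd d i) = 0)
    (hB : ∀ i, |v (Fin.natAdd d i)| < B) : ‖v‖ < d * B := by
  have hB0 : 0 < B := (abs_nonneg _).trans_lt (hB ⟨0, hd⟩)
  have hsq : ‖v‖ ^ 2 < d * B ^ 2 := by
    rw [EuclideanSpace.norm_sq_eq, Fin.sum_univ_add]
    simp only [h0, norm_zero, Real.norm_eq_abs, zero_pow two_ne_zero, sum_const_zero, zero_add]
    calc ∑ i : Fin d, |v (Fin.natAdd d i)| ^ 2 < ∑ _i : Fin d, B ^ 2 :=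
          sum_lt_sum_of_nonempty (univ_nonempty_iff.mpr ⟨⟨0, hd⟩⟩) fun i _ =>
            pow_lt_pow_left₀ (hB i) (abs_nonneg _) two_ne_zero
      _ = d * B ^ 2 := by simp
  have hd1 : (1 : ℝ) ≤ d := by exact_mod_cast hd
  refine lt_of_pow_lt_pow_left₀ 2 (by positivity) (hsq.trans_le ?_)
  nlinarith

section KernelLattice

variable {d : ℕ}

def kernelLatticeBasis (c p : ℤ) (A : Matrix (Fin d) (Fin d) ℤ) :
    Matrix (Fin (d + d)) (Fin (d + d)) ℤ :=
  Matrix.reindex finSumFinEquiv finSumFinEquiv (Matrix.fromBlocks ((c * p) • 1) (c • A) 0 1)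

theorem kernelLatticeBasis_mulVec (c p : ℤ) (A : Matrix (Fin d) (Fin d) ℤ) (y z : Fin d → ℤ) :
    kernelLatticeBasis c p A *ᵥ (Sum.elim y z ∘ finSumFinEquiv.symm) =
      Sum.elim (c • (p • y + A *ᵥ z)) z ∘ finSumFinEquiv.symm := by
  rw [kernelLatticeBasis, reindex_apply, submatrix_mulVec_equiv, Equiv.symm_symm,
    Function.comp_assoc, Equiv.symm_comp_self, Function.comp_id, fromBlocks_mulVec]
  simp only [Sum.elim_comp_inl, Sum.elim_comp_inr, smul_mulVec, one_mulVec, zero_mulVec,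
    zero_add, mul_smul, smul_add]

theorem exists_kernelLatticeBasis_mulVec_eq (c : ℤ) {p : ℤ} {A : Matrix (Fin d) (Fin d) ℤ}
    {z : Fin d → ℤ} (hz : ∀ i, p ∣ (A *ᵥ z) i) :
    ∃ w, kernelLatticeBasis c p A *ᵥ w = Sum.elim (0 : Fin d → ℤ) z ∘ finSumFinEquiv.symm := by
  choose y hy using hz
  refine ⟨Sum.elim (-y) z ∘ finSumFinEquiv.symm, ?_⟩
  rw [kernelLatticeBasis_mulVec]
  congr
  ext i
  simp [hy]

theorem dvd_kernelLatticeBasis_mul_apply_castAdd (c p : ℤ) (A : Matrix (Fin d) (Fin d) ℤ)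
    (U : Matrix (Fin (d + d)) (Fin (d + d)) ℤ) (i : Fin d) (j : Fin (d + d)) :
    c ∣ (kernelLatticeBasis c p A * U) (Fin.castAdd d i) j := by
  rw [mul_apply]
  refine Finset.dvd_sum fun t _ => Dvd.dvd.mul_right ?_ _
  rcases ht : finSumFinEquiv.symm t with s | s <;>
    simp only [kernelLatticeBasis, reindex_apply, submatrix_apply, finSumFinEquiv_symm_apply_castAdd,
      ht, fromBlocks_apply₁₁, fromBlocks_apply₁₂, Matrix.smul_apply, smul_eq_mul, mul_assoc]
  exacts [dvd_mul_right _ _, dvd_mul_right _ _]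

theorem le_norm_gramSchmidt_of_dvd_castAdd {k : ℕ} {c : ℤ} {B : ℝ}
    (hB : 2 ^ (2 * d - 1) * B ≤ c) {M : Matrix (Fin (d + d)) (Fin (d + d)) ℤ}
    (hdvd : ∀ i j, c ∣ M (Fin.castAdd d i) j)
    {mcol : Fin (d + d) → EuclideanSpace ℝ (Fin (d + d))} (hmcol : ∀ j i, mcol j i = (M i j : ℝ))
    (hreduced : ∀ (i : Fin (d + d)) (h : (i : ℕ) + 1 < d + d),
      ‖gramSchmidt ℝ mcol i‖ ≤ 2 * ‖gramSchmidt ℝ mcol ⟨(i : ℕ) + 1, h⟩‖)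
    (hzero : ∀ j : Fin (d + d), (j : ℕ) < k → ∀ i : Fin d, M (Fin.castAdd d i) j = 0)
    (hnonzero : ∀ h : k < d + d, ∃ i : Fin d, M (Fin.castAdd d i) ⟨k, h⟩ ≠ 0)
    {t : Fin (d + d)} (ht : k ≤ t) : B ≤ ‖gramSchmidt ℝ mcol t‖ := by
  obtain ⟨i, hi⟩ := hnonzero (by omega)
  have hcM : c ≤ |M (Fin.castAdd d i) ⟨k, by omega⟩| :=
    Int.le_of_dvd (abs_pos.mpr hi) ((dvd_abs _ _).mpr (hdvd i _))
  refine le_norm_gramSchmidt_of_reduced mcol hreduced (k := ⟨k, by omega⟩) ht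
    (i := Fin.castAdd d i) (fun j hj => by rw [hmcol, hzero j hj, Int.cast_zero]) ?_
  rw [hmcol, ← Int.cast_abs, show d + d - 1 = 2 * d - 1 by omega]
  exact hB.trans (Int.cast_le.mpr hcM)

end KernelLattice

theorem kernel_mem_span_of_reduced_lattice_basis_general
    (p : ℕ) (hp : p.Prime) (d : ℕ)
    (A : Matrix (Fin d) (Fin d) ℤ)
    (c : ℤ) (hc : c = (p : ℤ) * (d : ℤ) * 2 ^ (2 * d - 1))
    (L U : Matrix (Fin (d + d)) (Fin (d + d)) ℤ)
    (hL : L = Matrix.reindex finSumFinEquiv finSumFinEquiv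
      (Matrix.fromBlocks ((c * (p : ℤ)) • (1 : Matrix (Fin d) (Fin d) ℤ)) (c • A) 0 1))
    (hU : IsUnit U.det)
    (M : Matrix (Fin (d + d)) (Fin (d + d)) ℤ) (hM : M = L * U)
    (mcol : Fin (d + d) → EuclideanSpace ℝ (Fin (d + d)))
    (hmcol : ∀ j i, mcol j i = (M i j : ℝ))
    (hreduced : ∀ (i : Fin (d + d)) (h : (i : ℕ) + 1 < d + d),
      ‖InnerProductSpace.gramSchmidt ℝ mcol i‖ ≤ 2 * ‖InnerProductSpace.gramSchmidt ℝ mcol ⟨(i : ℕ) + 1, h⟩‖)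
    (k : ℕ)
    (hzero : ∀ j : Fin (d + d), (j : ℕ) < k → ∀ i : Fin d, M (Fin.castAdd d i) j = 0)
    (hnonzero : ∀ h : k < d + d, ∃ i : Fin d, M (Fin.castAdd d i) ⟨k, h⟩ ≠ 0)
    (x : Fin d → ZMod p) (hx : (A.map (Int.cast : ℤ → ZMod p)).mulVec x = 0) :
    x ∈ Submodule.span (ZMod p)
      {v : Fin d → ZMod p | ∃ j : Fin (d + d), (j : ℕ) < k ∧
        v = fun i => ((M (Fin.natAdd d i) j : ℤ) : ZMod p)} := by
  have : NeZero p := ⟨hp.ne_zero⟩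
  set z : Fin d → ℤ := fun i => ((x i).val : ℤ)
  obtain ⟨w, hw⟩ := exists_kernelLatticeBasis_mulVec_eq c (dvd_mulVec_val_of_map_mulVec_eq_zero hx)
  obtain ⟨a, hMa⟩ : ∃ a, M *ᵥ a = Sum.elim (0 : Fin d → ℤ) z ∘ finSumFinEquiv.symm :=
    ⟨U⁻¹ *ᵥ w, by rw [mulVec_mulVec, hM, mul_nonsing_inv_cancel_right _ _ hU, hL]; exact hw⟩
  have hsmall (t : Fin (d + d)) : ‖∑ j, (a j : ℝ) • mcol j‖ < d * p := by
    refine EuclideanSpace.norm_lt_mul_of_castAdd_eq_zero (by have := t.isLt; omega)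
      (fun i => ?_) fun i => ?_
    all_goals simp only [sum_intCast_smul_apply hmcol, hMa, Function.comp_apply,
      finSumFinEquiv_symm_apply_castAdd, finSumFinEquiv_symm_apply_natAdd, Sum.elim_inl,
      Sum.elim_inr, Pi.zero_apply, Int.cast_zero, z]
    rw [Int.cast_natCast, Nat.abs_cast]
    exact_mod_cast (x i).val_lt
  have hdvd : ∀ i j, c ∣ M (Fin.castAdd d i) j := by
    rw [hM, hL]
    exact dvd_kernelLatticeBasis_mul_apply_castAdd c p A U
  have hlarge (t : Fin (d + d)) (ht : k ≤ t) : (d * p : ℝ) ≤ ‖gramSchmidt ℝ mcol t‖ :=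
    le_norm_gramSchmidt_of_dvd_castAdd (le_of_eq (by rw [hc]; push_cast; ring)) hdvd hmcol
      hreduced hzero hnonzero ht
  have ha : ∀ t : Fin (d + d), k ≤ t → a t = 0 :=
    eq_zero_of_norm_sum_lt_norm_gramSchmidt_of_isUpperSet mcol a (s := {t | k ≤ t})
      (fun _ _ hst ht => Nat.le_trans ht hst) fun t ht => (hsmall t).trans_le (hlarge t ht)
  have hxa : x = ∑ j, (a j : ZMod p) • fun i => (M (Fin.natAdd d i) j : ZMod p) := by
    rw [← intCast_mulVec_comp_eq_sum_smul, hMa]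
    ext i
    simp only [Function.comp_apply, finSumFinEquiv_symm_apply_natAdd, Sum.elim_inr, z,
      Int.cast_natCast, ZMod.natCast_zmod_val]
  rw [hxa]
  exact sum_smul_mem_span_of_forall_not_eq_zero _ _ fun j hj => by
    rw [ha j (not_lt.mp hj), Int.cast_zero]

/-- Reduction from the kernel problem over `ℤ/pℤ` to lattice reduction: if the basis `M = LU`
of the lattice built from `A` (with blocks `[[cp·Id, c·A], [0, Id]]`, `c = p·d·2^{2d−1}`) has
non-increasing-by-more-than-a-factor-2 Gram–Schmidt norms, and its first `k` columns are
exactly those vanishing on the first `d` coordinates, then every kernel vector of `A mod p`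
lies in the span of the reductions mod `p` of the lower halves of these `k` columns. -/
theorem kernel_mem_span_of_reduced_lattice_basis
    (p : ℕ) (hp : p.Prime) (d : ℕ) (hd : 2 ≤ d)
    (A : Matrix (Fin d) (Fin d) ℤ)
    (c : ℤ) (hc : c = (p : ℤ) * (d : ℤ) * 2 ^ (2 * d - 1))
    (L U : Matrix (Fin (d + d)) (Fin (d + d)) ℤ)
    (hL : L = Matrix.reindex finSumFinEquiv finSumFinEquiv
      (Matrix.fromBlocks ((c * (p : ℤ)) • (1 : Matrix (Fin d) (Fin d) ℤ)) (c • A) 0 1))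
    (hU : IsUnit U.det)
    (M : Matrix (Fin (d + d)) (Fin (d + d)) ℤ) (hM : M = L * U)
    (mcol : Fin (d + d) → EuclideanSpace ℝ (Fin (d + d)))
    (hmcol : ∀ j i, mcol j i = (M i j : ℝ))
    (hreduced : ∀ (i : Fin (d + d)) (h : (i : ℕ) + 1 < d + d),
      ‖InnerProductSpace.gramSchmidt ℝ mcol i‖ ≤ 2 * ‖InnerProductSpace.gramSchmidt ℝ mcol ⟨(i : ℕ) + 1, h⟩‖)
    (k : ℕ) (hk : k ≤ d + d)
    (hzero : ∀ j : Fin (d + d), (j : ℕ) < k → ∀ i : Fin d, M (Fin.castAdd d i) j = 0)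
    (hnonzero : ∀ h : k < d + d, ∃ i : Fin d, M (Fin.castAdd d i) ⟨k, h⟩ ≠ 0)
    (x : Fin d → ZMod p) (hx : (A.map (Int.cast : ℤ → ZMod p)).mulVec x = 0) :
    x ∈ Submodule.span (ZMod p)
      {v : Fin d → ZMod p | ∃ j : Fin (d + d), (j : ℕ) < k ∧
        v = fun i => ((M (Fin.natAdd d i) j : ℤ) : ZMod p)} :=
  kernel_mem_span_of_reduced_lattice_basis_general p hp d A c hc L U hL hU M hM mcol hmcol hreduced
    k hzero hnonzero x hx
end
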